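/- arXiv:2108.05586 — 5 statements merged into one kernel-verified Lean document; each statement's English description precedes it below -/
import Mathlib

section
/- Let (g, δ_g) be a Lie coalgebra over a field k of characteristic 0, V a vector space, and Ω = (Δ_E : V → g ⊗ V, Δ_V : V → g ⊗ g, δ_V : V → V ⊗ V) an extending datum. Define δ on E = g ⊕ V by δ(a + x) = δ_g(a) + Δ_E(x) − τΔ_E(x) + Δ_V(x) + δ_V(x). Then (E, δ) is a Lie coalgebra if and only if, for all x ∈ V: (CLE1) Δ_V(x) = −τΔ_V(x) and δ_V(x) = −τδ_V(x); (CLE2) (I⊗Δ_V)Δ_E(x) + (I⊗δ_g)Δ_V(x) − τ₁₂(I⊗Δ_V)Δ_E(x) − τ₁₂(I⊗δ_g)Δ_V(x) = −(Δ_V⊗I)τΔ_E(x) + (δ_g⊗I)Δ_V(x); (CLE3) (I⊗Δ_E)Δ_E(x) − τ₁₂(I⊗Δ_E)Δ_E(x) = (δ_g⊗I)Δ_E(x) + (Δ_V⊗I)δ_V(x); (CLE4) (I⊗δ_V)Δ_E(x) − τ₁₂(I⊗Δ_E)δ_V(x) = (Δ_E⊗I)δ_V(x); (CLE5) (I⊗δ_V)δ_V(x)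 − τ₁₂(I⊗δ_V)δ_V(x) = (δ_V⊗I)δ_V(x). -/
open TensorProduct LinearMap

noncomputable section

/-- The flip `A ⊗ B → B ⊗ A`. -/
def flipT (k A B : Type*) [Field k] [AddCommGroup A] [Module k A]
    [AddCommGroup B] [Module k B] : A ⊗[k] B →ₗ[k] B ⊗[k] A :=
  (TensorProduct.comm k A B).toLinearMap

/-- Swap of the first two tensor factors `A ⊗ (B ⊗ C) → B ⊗ (A ⊗ C)`. -/
def swap12 (k A B C : Type*) [Field k] [AddCommGroup A] [Module k A]
    [AddCommGroup B] [Module k B] [AddCommGroup C] [Module k C] :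
    A ⊗[k] (B ⊗[k] C) →ₗ[k] B ⊗[k] (A ⊗[k] C) :=
  (TensorProduct.assoc k B A C).toLinearMap ∘ₗ
    rTensor C (flipT k A B) ∘ₗ (TensorProduct.assoc k A B C).symm.toLinearMap

/-- Associator as a linear map. -/
def asr (k A B C : Type*) [Field k] [AddCommGroup A] [Module k A]
    [AddCommGroup B] [Module k B] [AddCommGroup C] [Module k C] :
    (A ⊗[k] B) ⊗[k] C →ₗ[k] A ⊗[k] (B ⊗[k] C) :=
  (TensorProduct.assoc k A B C).toLinearMap

/-- `δ : M → M ⊗ M` is a Lie coalgebra structure: anti-cocommutativity and co-Jacobi. -/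
def IsLieCoalgebra {k M : Type*} [Field k] [AddCommGroup M] [Module k M]
    (δ : M →ₗ[k] M ⊗[k] M) : Prop :=
  (∀ m, flipT k M M (δ m) = - δ m) ∧
  (∀ m, lTensor M δ (δ m) - swap12 k M M M (lTensor M δ (δ m)) =
      asr k M M M (rTensor M δ (δ m)))

/-- A (bilinear) map `b` is a Lie bracket: alternating and Jacobi (in Leibniz form). -/
def IsLieBracket {k L : Type*} [Field k] [AddCommGroup L] [Module k L]
    (b : L →ₗ[k] L →ₗ[k] L) : Prop :=
  (∀ a, b a a = 0) ∧ (∀ a c d, b a (b c d) = b (b a c) d + b c (b a d))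

/-- The adjoint action of `a` on `L ⊗ L`: `a.(Σ b₁⊗b₂) = Σ [a,b₁]⊗b₂ + b₁⊗[a,b₂]`. -/
def adT {k L : Type*} [Field k] [AddCommGroup L] [Module k L]
    (b : L →ₗ[k] L →ₗ[k] L) (a : L) : L ⊗[k] L →ₗ[k] L ⊗[k] L :=
  rTensor L (b a) + lTensor L (b a)

/-- `(L, b, δ)` is a Lie bialgebra. -/
def IsLieBialgebra {k L : Type*} [Field k] [AddCommGroup L] [Module k L]
    (b : L →ₗ[k] L →ₗ[k] L) (δ : L →ₗ[k] L ⊗[k] L) : Prop :=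
  IsLieBracket b ∧ IsLieCoalgebra δ ∧
    ∀ a c, δ (b a c) = adT b a (δ c) - adT b c (δ a)

variable {k g V : Type*} [Field k] [CharZero k]
  [AddCommGroup g] [Module k g] [AddCommGroup V] [Module k V]

/-- The unified co-product map on `E = g ⊕ V`:
`δ_E(a + x) = δ_g(a) + Δ_E(x) − τΔ_E(x) + Δ_V(x) + δ_V(x)`. -/
def uniCoprod (δg : g →ₗ[k] g ⊗[k] g) (ΔE : V →ₗ[k] g ⊗[k] V)
    (ΔV : V →ₗ[k] g ⊗[k] g) (δV : V →ₗ[k] V ⊗[k] V) :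
    (g × V) →ₗ[k] (g × V) ⊗[k] (g × V) :=
  map (inl k g V) (inl k g V) ∘ₗ δg ∘ₗ fst k g V +
    (map (inl k g V) (inr k g V) ∘ₗ ΔE
      - map (inr k g V) (inl k g V) ∘ₗ flipT k g V ∘ₗ ΔE
      + map (inl k g V) (inl k g V) ∘ₗ ΔV
      + map (inr k g V) (inr k g V) ∘ₗ δV) ∘ₗ snd k g V

/-- Conditions (CLE1)–(CLE5): `(Δ_E, Δ_V, δ_V)` is a Lie coalgebraic extending
structure of `(g, δ_g)` by `V`. -/
def IsCoalgExtStructure (δg : g →ₗ[k] g ⊗[k] g) (ΔE : V →ₗ[k] g ⊗[k] V)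
    (ΔV : V →ₗ[k] g ⊗[k] g) (δV : V →ₗ[k] V ⊗[k] V) : Prop :=
  -- (CLE1)
  (∀ x, flipT k g g (ΔV x) = - ΔV x) ∧ (∀ x, flipT k V V (δV x) = - δV x) ∧
  -- (CLE2)
  (∀ x, lTensor g ΔV (ΔE x) + lTensor g δg (ΔV x)
      - swap12 k g g g (lTensor g ΔV (ΔE x)) - swap12 k g g g (lTensor g δg (ΔV x)) =
      - asr k g g g (rTensor g ΔV (flipT k g V (ΔE x)))
      + asr k g g g (rTensor g δg (ΔV x))) ∧
  -- (CLE3)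
  (∀ x, lTensor g ΔE (ΔE x) - swap12 k g g V (lTensor g ΔE (ΔE x)) =
      asr k g g V (rTensor V δg (ΔE x)) + asr k g g V (rTensor V ΔV (δV x))) ∧
  -- (CLE4)
  (∀ x, lTensor g δV (ΔE x) - swap12 k V g V (lTensor V ΔE (δV x)) =
      asr k g V V (rTensor V ΔE (δV x))) ∧
  -- (CLE5)
  (∀ x, lTensor V δV (δV x) - swap12 k V V V (lTensor V δV (δV x)) =
      asr k V V V (rTensor V δV (δV x)))

end
noncomputable section
variable {k g V : Type*} [Field k] [CharZero k]
  [AddCommGroup g] [Module k g] [AddCommGroup V] [Module k V]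

section MyInfra
variable {k : Type*} [Field k]
variable {A B C D A' B' C' : Type*}
  [AddCommGroup A] [Module k A] [AddCommGroup B] [Module k B]
  [AddCommGroup C] [Module k C] [AddCommGroup D] [Module k D]
  [AddCommGroup A'] [Module k A'] [AddCommGroup B'] [Module k B']
  [AddCommGroup C'] [Module k C']

@[simp] lemma flipT_tmul (a : A) (b : B) : flipT k A B (a ⊗ₜ b) = b ⊗ₜ a := rfl

@[simp] lemma swap12_tmul (a : A) (b : B) (c : C) :
    swap12 k A B C (a ⊗ₜ (b ⊗ₜ c)) = b ⊗ₜ (a ⊗ₜ c) := rfl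

@[simp] lemma asr_tmul (a : A) (b : B) (c : C) :
    asr k A B C ((a ⊗ₜ b) ⊗ₜ c) = a ⊗ₜ (b ⊗ₜ c) := rfl

@[simp] lemma flipT_flipT (t : A ⊗[k] B) : flipT k B A (flipT k A B t) = t := by
  induction t using TensorProduct.induction_on with
  | zero => simp
  | tmul => rfl
  | add x y hx hy => simp [map_add, hx, hy]

@[simp] lemma swap12_swap12 (t : A ⊗[k] (B ⊗[k] C)) :
    swap12 k B A C (swap12 k A B C t) = t := by
  induction t using TensorProduct.induction_on with
  | zero => simp
  | tmul a bc =>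
    induction bc using TensorProduct.induction_on with
    | zero => simp
    | tmul => rfl
    | add x y hx hy => simp only [tmul_add, map_add, hx, hy]
  | add x y hx hy => simp [map_add, hx, hy]

lemma map_map_apply (f : A →ₗ[k] A') (g : B →ₗ[k] B') (f' : A' →ₗ[k] C)
    (g' : B' →ₗ[k] C') (t : A ⊗[k] B) :
    map f' g' (map f g t) = map (f' ∘ₗ f) (g' ∘ₗ g) t := by
  rw [map_comp]; rfl

lemma lTensor_map_apply (f : B' →ₗ[k] C) (a : A →ₗ[k] A') (b : B →ₗ[k] B')
    (t : A ⊗[k] B) :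
    lTensor A' f (map a b t) = map a (f ∘ₗ b) t := by
  have : lTensor A' f = map (LinearMap.id) f := rfl
  rw [this, map_map_apply, LinearMap.id_comp]

lemma rTensor_map_apply (f : A' →ₗ[k] C) (a : A →ₗ[k] A') (b : B →ₗ[k] B')
    (t : A ⊗[k] B) :
    rTensor B' f (map a b t) = map (f ∘ₗ a) b t := by
  have : rTensor B' f = map f (LinearMap.id) := rfl
  rw [this, map_map_apply, LinearMap.id_comp]

lemma flipT_map (f : A →ₗ[k] A') (g : B →ₗ[k] B') (t : A ⊗[k] B) :
    flipT k A' B' (map f g t) = map g f (flipT k A B t) := by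
  induction t using TensorProduct.induction_on with
  | zero => simp
  | tmul => rfl
  | add x y hx hy => simp [map_add, hx, hy]

lemma swap12_map (f : A →ₗ[k] A') (g : B →ₗ[k] B') (h : C →ₗ[k] C')
    (t : A ⊗[k] (B ⊗[k] C)) :
    swap12 k A' B' C' (map f (map g h) t) = map g (map f h) (swap12 k A B C t) := by
  induction t using TensorProduct.induction_on with
  | zero => simp
  | tmul a bc =>
    induction bc using TensorProduct.induction_on with
    | zero => simp
    | tmul => rfl
    | add x y hx hy =>
      simp only [map_tmul, tmul_add, map_add] at hx hy ⊢; rw [hx, hy]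
  | add x y hx hy => simp [map_add, hx, hy]

lemma asr_map (f : A →ₗ[k] A') (g : B →ₗ[k] B') (h : C →ₗ[k] C')
    (t : (A ⊗[k] B) ⊗[k] C) :
    asr k A' B' C' (map (map f g) h t) = map f (map g h) (asr k A B C t) := by
  induction t using TensorProduct.induction_on with
  | zero => simp
  | tmul ab c =>
    induction ab using TensorProduct.induction_on with
    | zero => simp
    | tmul => rfl
    | add x y hx hy =>
      simp only [map_tmul, add_tmul, map_add] at hx hy ⊢; rw [hx, hy]
  | add x y hx hy => simp [map_add, hx, hy]

/-- Key lemma: converts `(δ ⊗ I)∘τ` form into `σ₂₃ σ₁₂ (I ⊗ δ)` form. -/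
lemma key1 (f : B →ₗ[k] C ⊗[k] D) (t : A ⊗[k] B) :
    asr k C D A (rTensor A f (flipT k A B t)) =
      lTensor C (flipT k A D) (swap12 k A C D (lTensor A f t)) := by
  induction t using TensorProduct.induction_on with
  | zero => simp
  | tmul a b =>
    simp only [flipT_tmul, rTensor_tmul, lTensor_tmul]
    induction f b using TensorProduct.induction_on with
    | zero => simp
    | tmul => rfl
    | add x y hx hy => simp only [add_tmul, tmul_add, map_add, hx, hy]
  | add x y hx hy => simp [map_add, hx, hy]

/-- Second key lemma: `σ₂₃ ∘ asr ∘ (f ⊗ I) = σ₁₂ ∘ (I ⊗ f) ∘ τ`. -/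
lemma key2 (f : B →ₗ[k] C ⊗[k] D) (t : B ⊗[k] A) :
    lTensor C (flipT k D A) (asr k C D A (rTensor A f t)) =
      swap12 k A C D (lTensor A f (flipT k B A t)) := by
  have := key1 (k := k) f (flipT k B A t)
  rw [flipT_flipT] at this
  rw [this]
  generalize lTensor A f (flipT k B A t) = u
  induction u using TensorProduct.induction_on with
  | zero => simp
  | tmul a cd =>
    induction cd using TensorProduct.induction_on with
    | zero => simp
    | tmul => rfl
    | add x y hx hy => simp only [tmul_add, map_add, hx, hy]
  | add x y hx hy => simp [map_add, hx, hy]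

lemma map_lcomp (a : A →ₗ[k] A') (P : B' →ₗ[k] C) (Q : B →ₗ[k] B') (t : A ⊗[k] B) :
    map a (P ∘ₗ Q) t = map a P (lTensor A Q t) := by
  have h : lTensor A Q = map (LinearMap.id) Q := rfl
  rw [h, map_map_apply, LinearMap.comp_id]

/-- Naturality of `σ₂₃ = I ⊗ τ`. -/
lemma flip23_map (f : A →ₗ[k] A') (g : B →ₗ[k] B') (h : C →ₗ[k] C')
    (t : A ⊗[k] (B ⊗[k] C)) :
    lTensor A' (flipT k B' C') (map f (map g h) t) =
      map f (map h g) (lTensor A (flipT k B C) t) := by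
  induction t using TensorProduct.induction_on with
  | zero => simp
  | tmul a bc =>
    induction bc using TensorProduct.induction_on with
    | zero => simp
    | tmul => rfl
    | add x y hx hy =>
      simp only [map_tmul, lTensor_tmul, tmul_add, map_add] at hx hy ⊢
      rw [hx, hy]
  | add x y hx hy => simp [map_add, hx, hy]

/-- Braid relation `σ₂₃ σ₁₂ σ₂₃ = σ₁₂ σ₂₃ σ₁₂`. -/
lemma braid (t : A ⊗[k] (B ⊗[k] C)) :
    lTensor C (flipT k A B) (swap12 k A C B (lTensor A (flipT k B C) t)) =
      swap12 k B C A (lTensor B (flipT k A C) (swap12 k A B C t)) := by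
  induction t using TensorProduct.induction_on with
  | zero => simp
  | tmul a bc =>
    induction bc using TensorProduct.induction_on with
    | zero => simp
    | tmul => rfl
    | add x y hx hy => simp only [tmul_add, map_add, hx, hy]
  | add x y hx hy => simp [map_add, hx, hy]

section Gform
variable {M : Type*} [AddCommGroup M] [Module k M]

/-- `σ₂₃ F = -F` for `F = (I ⊗ δ) δ` when `δ` is anti-cocommutative. -/
lemma sigma23_F {δ : M →ₗ[k] M ⊗[k] M} (h : ∀ m, flipT k M M (δ m) = - δ m)
    (m : M) :
    lTensor M (flipT k M M) (lTensor M δ (δ m)) = - lTensor M δ (δ m) := by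
  rw [← lTensor_comp_apply]
  have : flipT k M M ∘ₗ δ = - δ := LinearMap.ext fun m => h m
  rw [this, lTensor_neg, LinearMap.neg_apply]

/-- The co-Jacobi identity in `G`-form, assuming anti-cocommutativity. -/
lemma coJacobi_iff_G {δ : M →ₗ[k] M ⊗[k] M} (h : ∀ m, flipT k M M (δ m) = - δ m)
    (m : M) :
    (lTensor M δ (δ m) - swap12 k M M M (lTensor M δ (δ m)) =
        asr k M M M (rTensor M δ (δ m))) ↔
      lTensor M δ (δ m) - swap12 k M M M (lTensor M δ (δ m)) +
        lTensor M (flipT k M M) (swap12 k M M M (lTensor M δ (δ m))) = 0 := by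
  have hr : asr k M M M (rTensor M δ (δ m)) =
      - lTensor M (flipT k M M) (swap12 k M M M (lTensor M δ (δ m))) := by
    have h1 : δ m = - flipT k M M (δ m) := by rw [h m, neg_neg]
    calc asr k M M M (rTensor M δ (δ m))
        = - asr k M M M (rTensor M δ (flipT k M M (δ m))) := by
          rw [h1]; simp only [map_neg, neg_neg, h m]
      _ = - lTensor M (flipT k M M) (swap12 k M M M (lTensor M δ (δ m))) := by
          rw [key1]
  rw [hr, eq_neg_iff_add_eq_zero]

/-- `σ₂₃ G = -G`. -/
lemma sigma23_G {δ : M →ₗ[k] M ⊗[k] M} (h : ∀ m, flipT k M M (δ m) = - δ m)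
    (m : M) :
    lTensor M (flipT k M M)
      (lTensor M δ (δ m) - swap12 k M M M (lTensor M δ (δ m)) +
        lTensor M (flipT k M M) (swap12 k M M M (lTensor M δ (δ m)))) =
    - (lTensor M δ (δ m) - swap12 k M M M (lTensor M δ (δ m)) +
        lTensor M (flipT k M M) (swap12 k M M M (lTensor M δ (δ m)))) := by
  set F := lTensor M δ (δ m) with hF
  have h23 : lTensor M (flipT k M M) F = - F := sigma23_F h m
  have hinv : ∀ t : M ⊗[k] (M ⊗[k] M),
      lTensor M (flipT k M M) (lTensor M (flipT k M M) t) = t := by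
    intro t
    rw [← lTensor_comp_apply]
    have : flipT k M M ∘ₗ flipT k M M = LinearMap.id :=
      LinearMap.ext fun t => flipT_flipT t
    rw [this, lTensor_id, LinearMap.id_apply]
  simp only [map_add, map_sub, h23, hinv, map_neg]
  abel

/-- `σ₁₂ G = -G`. -/
lemma sigma12_G {δ : M →ₗ[k] M ⊗[k] M} (h : ∀ m, flipT k M M (δ m) = - δ m)
    (m : M) :
    swap12 k M M M
      (lTensor M δ (δ m) - swap12 k M M M (lTensor M δ (δ m)) +
        lTensor M (flipT k M M) (swap12 k M M M (lTensor M δ (δ m)))) =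
    - (lTensor M δ (δ m) - swap12 k M M M (lTensor M δ (δ m)) +
        lTensor M (flipT k M M) (swap12 k M M M (lTensor M δ (δ m)))) := by
  set F := lTensor M δ (δ m) with hF
  have h23 : lTensor M (flipT k M M) F = - F := sigma23_F h m
  have hbr : swap12 k M M M (lTensor M (flipT k M M) (swap12 k M M M F)) =
      lTensor M (flipT k M M) (swap12 k M M M (lTensor M (flipT k M M) F)) :=
    (braid F).symm
  simp only [map_add, map_sub, map_neg, swap12_swap12, hbr, h23]
  abel
end Gform

end MyInfra

section MyInfra2
variable {k : Type*} [Field k]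
variable {A B A' B' : Type*}
  [AddCommGroup A] [Module k A] [AddCommGroup B] [Module k B]
  [AddCommGroup A'] [Module k A'] [AddCommGroup B'] [Module k B']

lemma map_add_right_apply (a : A →ₗ[k] A') (f g₂ : B →ₗ[k] B') (t : A ⊗[k] B) :
    map a (f + g₂) t = map a f t + map a g₂ t := by
  rw [map_add_right]; rfl

lemma map_sub_right (a : A →ₗ[k] A') (f g₂ : B →ₗ[k] B') :
    map a (f - g₂) = map a f - map a g₂ := by
  ext x y; simp [tmul_sub]

lemma map_sub_right_apply (a : A →ₗ[k] A') (f g₂ : B →ₗ[k] B') (t : A ⊗[k] B) :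
    map a (f - g₂) t = map a f t - map a g₂ t := by
  rw [map_sub_right]; rfl
end MyInfra2

section MyEmach
variable {k g V : Type*} [Field k]
  [AddCommGroup g] [Module k g] [AddCommGroup V] [Module k V]

lemma idE : inl k g V ∘ₗ fst k g V + inr k g V ∘ₗ snd k g V = LinearMap.id := by
  apply LinearMap.ext; intro m
  simp [Prod.ext_iff]

lemma projE2 :
    (map (inl k g V) (inl k g V) ∘ₗ map (fst k g V) (fst k g V) +
    map (inl k g V) (inr k g V) ∘ₗ map (fst k g V) (snd k g V)) +
    (map (inr k g V) (inl k g V) ∘ₗ map (snd k g V) (fst k g V) +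
    map (inr k g V) (inr k g V) ∘ₗ map (snd k g V) (snd k g V)) = LinearMap.id := by
  simp only [← map_comp]
  simp only [← map_add_right]
  simp only [← map_add_left]
  simp only [idE, map_id]

lemma ext2 {t u : (g × V) ⊗[k] (g × V)}
    (h11 : map (fst k g V) (fst k g V) t = map (fst k g V) (fst k g V) u)
    (h12 : map (fst k g V) (snd k g V) t = map (fst k g V) (snd k g V) u)
    (h21 : map (snd k g V) (fst k g V) t = map (snd k g V) (fst k g V) u)
    (h22 : map (snd k g V) (snd k g V) t = map (snd k g V) (snd k g V) u) :
    t = u := by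
  have ht := congrArg (fun P : _ →ₗ[k] _ => P t) projE2
  have hu := congrArg (fun P : _ →ₗ[k] _ => P u) projE2
  simp only [LinearMap.add_apply, LinearMap.comp_apply, LinearMap.id_apply] at ht hu
  rw [← ht, ← hu, h11, h12, h21, h22]

lemma projE3 :
    (map (inl k g V) (map (inl k g V) (inl k g V)) ∘ₗ
      map (fst k g V) (map (fst k g V) (fst k g V)) +
    map (inl k g V) (map (inl k g V) (inr k g V)) ∘ₗ
      map (fst k g V) (map (fst k g V) (snd k g V)) +
    map (inl k g V) (map (inr k g V) (inl k g V)) ∘ₗ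
      map (fst k g V) (map (snd k g V) (fst k g V)) +
    map (inl k g V) (map (inr k g V) (inr k g V)) ∘ₗ
      map (fst k g V) (map (snd k g V) (snd k g V))) +
    (map (inr k g V) (map (inl k g V) (inl k g V)) ∘ₗ
      map (snd k g V) (map (fst k g V) (fst k g V)) +
    map (inr k g V) (map (inl k g V) (inr k g V)) ∘ₗ
      map (snd k g V) (map (fst k g V) (snd k g V)) +
    map (inr k g V) (map (inr k g V) (inl k g V)) ∘ₗ
      map (snd k g V) (map (snd k g V) (fst k g V)) +
    map (inr k g V) (map (inr k g V) (inr k g V)) ∘ₗ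
      map (snd k g V) (map (snd k g V) (snd k g V))) = LinearMap.id := by
  apply TensorProduct.ext'
  intro m s
  simp only [LinearMap.add_apply, LinearMap.comp_apply, LinearMap.id_apply]
  induction s using TensorProduct.induction_on with
  | zero => simp
  | tmul n p =>
    obtain ⟨m1, m2⟩ := m; obtain ⟨n1, n2⟩ := n; obtain ⟨p1, p2⟩ := p
    rw [show ((m1, m2) : g × V) = ((m1, 0) : g × V) + ((0, m2) : g × V) by simp,
      show ((n1, n2) : g × V) = ((n1, 0) : g × V) + ((0, n2) : g × V) by simp,
      show ((p1, p2) : g × V) = ((p1, 0) : g × V) + ((0, p2) : g × V) by simp]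
    simp only [map_tmul, LinearMap.map_add, add_tmul, tmul_add, fst_apply, snd_apply,
      inl_apply, inr_apply, zero_tmul, tmul_zero, add_zero, zero_add]
    abel
  | add x y hx hy =>
    simp only [tmul_add, LinearMap.map_add]
    have h := congrArg₂ HAdd.hAdd hx hy
    refine Eq.trans ?_ h
    abel

lemma ext3 {t u : (g × V) ⊗[k] ((g × V) ⊗[k] (g × V))}
    (h111 : map (fst k g V) (map (fst k g V) (fst k g V)) t =
        map (fst k g V) (map (fst k g V) (fst k g V)) u)
    (h112 : map (fst k g V) (map (fst k g V) (snd k g V)) t =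
        map (fst k g V) (map (fst k g V) (snd k g V)) u)
    (h121 : map (fst k g V) (map (snd k g V) (fst k g V)) t =
        map (fst k g V) (map (snd k g V) (fst k g V)) u)
    (h122 : map (fst k g V) (map (snd k g V) (snd k g V)) t =
        map (fst k g V) (map (snd k g V) (snd k g V)) u)
    (h211 : map (snd k g V) (map (fst k g V) (fst k g V)) t =
        map (snd k g V) (map (fst k g V) (fst k g V)) u)
    (h212 : map (snd k g V) (map (fst k g V) (snd k g V)) t =
        map (snd k g V) (map (fst k g V) (snd k g V)) u)
    (h221 : map (snd k g V) (map (snd k g V) (fst k g V)) t =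
        map (snd k g V) (map (snd k g V) (fst k g V)) u)
    (h222 : map (snd k g V) (map (snd k g V) (snd k g V)) t =
        map (snd k g V) (map (snd k g V) (snd k g V)) u) :
    t = u := by
  have ht := congrArg (fun P : _ →ₗ[k] _ => P t) projE3
  have hu := congrArg (fun P : _ →ₗ[k] _ => P u) projE3
  simp only [LinearMap.add_apply, LinearMap.comp_apply, LinearMap.id_apply] at ht hu
  rw [← ht, ← hu, h111, h112, h121, h122, h211, h212, h221, h222]
end MyEmach



section UniComp
variable {k g V : Type*} [Field k]
  [AddCommGroup g] [Module k g] [AddCommGroup V] [Module k V]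
variable (δg : g →ₗ[k] g ⊗[k] g) (ΔE : V →ₗ[k] g ⊗[k] V)
    (ΔV : V →ₗ[k] g ⊗[k] g) (δV : V →ₗ[k] V ⊗[k] V)

lemma uniCoprod_comp_inl :
    uniCoprod δg ΔE ΔV δV ∘ₗ inl k g V = map (inl k g V) (inl k g V) ∘ₗ δg := by
  apply LinearMap.ext; intro a
  simp [uniCoprod]

lemma uniCoprod_comp_inr :
    uniCoprod δg ΔE ΔV δV ∘ₗ inr k g V =
      map (inl k g V) (inr k g V) ∘ₗ ΔE
      - map (inr k g V) (inl k g V) ∘ₗ flipT k g V ∘ₗ ΔE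
      + map (inl k g V) (inl k g V) ∘ₗ ΔV + map (inr k g V) (inr k g V) ∘ₗ δV := by
  apply LinearMap.ext; intro x
  simp [uniCoprod]

lemma uniCoprod_apply (m : g × V) :
    uniCoprod δg ΔE ΔV δV m =
      map (inl k g V) (inl k g V) (δg m.1) + map (inl k g V) (inr k g V) (ΔE m.2)
      - map (inr k g V) (inl k g V) (flipT k g V (ΔE m.2))
      + map (inl k g V) (inl k g V) (ΔV m.2) + map (inr k g V) (inr k g V) (δV m.2) := by
  simp only [uniCoprod, LinearMap.add_apply, LinearMap.comp_apply, LinearMap.sub_apply,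
    fst_apply, snd_apply]
  abel

lemma F_apply (m : g × V) :
    lTensor (g × V) (uniCoprod δg ΔE ΔV δV) (uniCoprod δg ΔE ΔV δV m) =
      map (inl k g V) (map (inl k g V) (inl k g V))
        (lTensor g δg (δg m.1) + lTensor g δg (ΔV m.2) + lTensor g ΔV (ΔE m.2))
    + map (inl k g V) (map (inl k g V) (inr k g V)) (lTensor g ΔE (ΔE m.2))
    + map (inl k g V) (map (inr k g V) (inl k g V))
        (- lTensor g (flipT k g V ∘ₗ ΔE) (ΔE m.2))
    + map (inl k g V) (map (inr k g V) (inr k g V)) (lTensor g δV (ΔE m.2))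
    + map (inr k g V) (map (inl k g V) (inl k g V))
        (- lTensor V δg (flipT k g V (ΔE m.2)) + lTensor V ΔV (δV m.2))
    + map (inr k g V) (map (inl k g V) (inr k g V)) (lTensor V ΔE (δV m.2))
    + map (inr k g V) (map (inr k g V) (inl k g V))
        (- lTensor V (flipT k g V ∘ₗ ΔE) (δV m.2))
    + map (inr k g V) (map (inr k g V) (inr k g V)) (lTensor V δV (δV m.2)) := by
  conv_lhs => rw [uniCoprod_apply]
  simp only [map_add, map_sub]
  rw [lTensor_map_apply, lTensor_map_apply, lTensor_map_apply, lTensor_map_apply,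
    lTensor_map_apply]
  rw [uniCoprod_comp_inl, uniCoprod_comp_inr]
  simp only [map_add_right_apply, map_sub_right_apply, map_lcomp]
  simp only [map_add, map_neg]
  abel

end UniComp

set_option maxHeartbeats 4000000 in
/-- **Theorem (unified co-product).** Given a Lie coalgebra `(g, δ_g)` and an
extending datum `(Δ_E, Δ_V, δ_V)`, the map
`δ_E(a + x) = δ_g(a) + Δ_E(x) − τΔ_E(x) + Δ_V(x) + δ_V(x)` on `E = g ⊕ V`
is a Lie coalgebra structure iff conditions (CLE1)–(CLE5) hold. -/
theorem unified_coproduct_iff (δg : g →ₗ[k] g ⊗[k] g)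
    (hδg : IsLieCoalgebra δg) (ΔE : V →ₗ[k] g ⊗[k] V)
    (ΔV : V →ₗ[k] g ⊗[k] g) (δV : V →ₗ[k] V ⊗[k] V) :
    IsLieCoalgebra (uniCoprod δg ΔE ΔV δV) ↔
      IsCoalgExtStructure δg ΔE ΔV δV := by
  constructor
  · rintro ⟨h1, h2⟩
    -- (CLE1)
    have c1a : ∀ x, flipT k g g (ΔV x) = - ΔV x := by
      intro x
      have h := congrArg (map (fst k g V) (fst k g V)) (h1 (0, x))
      rw [uniCoprod_apply] at h
      simpa only [flipT_map, flipT_flipT, map_map_apply, ← map_comp, fst_comp_inl, snd_comp_inl, fst_comp_inr, snd_comp_inr,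
      map_zero_left, map_zero_right, LinearMap.zero_apply, map_id, LinearMap.id_apply,
      map_add, map_sub, map_neg, map_zero, zero_add, add_zero, neg_zero, sub_zero, zero_sub] using h
    have c1b : ∀ x, flipT k V V (δV x) = - δV x := by
      intro x
      have h := congrArg (map (snd k g V) (snd k g V)) (h1 (0, x))
      rw [uniCoprod_apply] at h
      simpa only [flipT_map, flipT_flipT, map_map_apply, ← map_comp, fst_comp_inl, snd_comp_inl, fst_comp_inr, snd_comp_inr,
      map_zero_left, map_zero_right, LinearMap.zero_apply, map_id, LinearMap.id_apply,
      map_add, map_sub, map_neg, map_zero, zero_add, add_zero, neg_zero, sub_zero, zero_sub] using h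
    have hG : ∀ m, lTensor (g × V) (uniCoprod δg ΔE ΔV δV) (uniCoprod δg ΔE ΔV δV m)
        - swap12 k (g × V) (g × V) (g × V)
            (lTensor (g × V) (uniCoprod δg ΔE ΔV δV) (uniCoprod δg ΔE ΔV δV m))
        + lTensor (g × V) (flipT k (g × V) (g × V))
            (swap12 k (g × V) (g × V) (g × V)
              (lTensor (g × V) (uniCoprod δg ΔE ΔV δV) (uniCoprod δg ΔE ΔV δV m))) = 0 :=
      fun m => (coJacobi_iff_G h1 m).mp (h2 m)
    refine ⟨c1a, c1b, ?_, ?_, ?_, ?_⟩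
    · -- (CLE2)
      intro x
      have h := congrArg (map (fst k g V) (map (fst k g V) (fst k g V))) (hG (0, x))
      simp only [map_sub, map_add, map_zero, ← swap12_map, ← flip23_map] at h
      rw [F_apply] at h
      simp only [map_map_apply, ← map_comp, fst_comp_inl, snd_comp_inl, fst_comp_inr, snd_comp_inr,
      map_zero_left, map_zero_right, LinearMap.zero_apply, map_id, LinearMap.id_apply,
      map_add, map_sub, map_neg, map_zero, zero_add, add_zero, neg_zero, sub_zero, zero_sub] at h
      have k1 := key1 (k := k) ΔV (ΔE x)
      have k2 : asr k g g g (rTensor g δg (ΔV x)) =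
          - lTensor g (flipT k g g) (swap12 k g g g (lTensor g δg (ΔV x))) := by
        have hk := key1 (k := k) δg (ΔV x)
        rw [c1a x, map_neg, map_neg] at hk
        exact neg_eq_iff_eq_neg.mp hk
      rw [k1, k2]
      rw [← sub_eq_zero]
      refine Eq.trans ?_ h
      abel
    · -- (CLE3)
      intro x
      have h := congrArg (map (fst k g V) (map (fst k g V) (snd k g V))) (hG (0, x))
      simp only [map_sub, map_add, map_zero, ← swap12_map, ← flip23_map] at h
      rw [F_apply] at h
      simp only [map_map_apply, ← map_comp, fst_comp_inl, snd_comp_inl, fst_comp_inr, snd_comp_inr,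
      map_zero_left, map_zero_right, LinearMap.zero_apply, map_id, LinearMap.id_apply,
      map_add, map_sub, map_neg, map_zero, zero_add, add_zero, neg_zero, sub_zero, zero_sub] at h
      have k3 := key1 (k := k) δg (flipT k g V (ΔE x))
      rw [flipT_flipT] at k3
      have k4 : asr k g g V (rTensor V ΔV (δV x)) =
          - lTensor g (flipT k V g) (swap12 k V g g (lTensor V ΔV (δV x))) := by
        have hk := key1 (k := k) ΔV (δV x)
        rw [c1b x, map_neg, map_neg] at hk
        exact neg_eq_iff_eq_neg.mp hk
      rw [k3, k4]
      rw [← sub_eq_zero]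
      refine Eq.trans ?_ h
      abel
    · -- (CLE4)
      intro x
      have h := congrArg (map (fst k g V) (map (snd k g V) (snd k g V))) (hG (0, x))
      simp only [map_sub, map_add, map_zero, ← swap12_map, ← flip23_map] at h
      rw [F_apply] at h
      simp only [map_map_apply, ← map_comp, fst_comp_inl, snd_comp_inl, fst_comp_inr, snd_comp_inr,
      map_zero_left, map_zero_right, LinearMap.zero_apply, map_id, LinearMap.id_apply,
      map_add, map_sub, map_neg, map_zero, zero_add, add_zero, neg_zero, sub_zero, zero_sub] at h
      have k5 : asr k g V V (rTensor V ΔE (δV x)) =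
          - lTensor g (flipT k V V) (swap12 k V g V (lTensor V ΔE (δV x))) := by
        have hk := key1 (k := k) ΔE (δV x)
        rw [c1b x, map_neg, map_neg] at hk
        exact neg_eq_iff_eq_neg.mp hk
      rw [k5]
      rw [← sub_eq_zero]
      refine Eq.trans ?_ h
      abel
    · -- (CLE5)
      intro x
      have h := congrArg (map (snd k g V) (map (snd k g V) (snd k g V))) (hG (0, x))
      simp only [map_sub, map_add, map_zero, ← swap12_map, ← flip23_map] at h
      rw [F_apply] at h
      simp only [map_map_apply, ← map_comp, fst_comp_inl, snd_comp_inl, fst_comp_inr, snd_comp_inr,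
      map_zero_left, map_zero_right, LinearMap.zero_apply, map_id, LinearMap.id_apply,
      map_add, map_sub, map_neg, map_zero, zero_add, add_zero, neg_zero, sub_zero, zero_sub] at h
      have k6 : asr k V V V (rTensor V δV (δV x)) =
          - lTensor V (flipT k V V) (swap12 k V V V (lTensor V δV (δV x))) := by
        have hk := key1 (k := k) δV (δV x)
        rw [c1b x, map_neg, map_neg] at hk
        exact neg_eq_iff_eq_neg.mp hk
      rw [k6]
      rw [← sub_eq_zero]
      refine Eq.trans ?_ h
      abel
  · rintro ⟨c1a, c1b, hc2, hc3, hc4, hc5⟩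
    have hanti : ∀ m, flipT k (g × V) (g × V) (uniCoprod δg ΔE ΔV δV m)
        = - uniCoprod δg ΔE ΔV δV m := by
      intro m
      rw [uniCoprod_apply]
      simp only [map_add, map_sub, flipT_map, flipT_flipT]
      rw [hδg.1 m.1, c1a m.2, c1b m.2]
      simp only [map_neg]
      abel
    -- G-forms of the conditions
    have hc2G : ∀ x, lTensor g δg (ΔV x) + lTensor g ΔV (ΔE x)
        - swap12 k g g g (lTensor g δg (ΔV x)) - swap12 k g g g (lTensor g ΔV (ΔE x))
        + lTensor g (flipT k g g) (swap12 k g g g (lTensor g δg (ΔV x)))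
        + lTensor g (flipT k g g) (swap12 k g g g (lTensor g ΔV (ΔE x))) = 0 := by
      intro x
      have h := hc2 x
      have k1 := key1 (k := k) ΔV (ΔE x)
      have k2 : asr k g g g (rTensor g δg (ΔV x)) =
          - lTensor g (flipT k g g) (swap12 k g g g (lTensor g δg (ΔV x))) := by
        have hk := key1 (k := k) δg (ΔV x)
        rw [c1a x, map_neg, map_neg] at hk
        exact neg_eq_iff_eq_neg.mp hk
      rw [k1, k2, ← sub_eq_zero] at h
      refine Eq.trans ?_ h
      abel
    have hc3G : ∀ x, lTensor g ΔE (ΔE x) - swap12 k g g V (lTensor g ΔE (ΔE x))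
        - lTensor g (flipT k V g) (swap12 k V g g (lTensor V δg (flipT k g V (ΔE x))))
        + lTensor g (flipT k V g) (swap12 k V g g (lTensor V ΔV (δV x))) = 0 := by
      intro x
      have h := hc3 x
      have k3 := key1 (k := k) δg (flipT k g V (ΔE x))
      rw [flipT_flipT] at k3
      have k4 : asr k g g V (rTensor V ΔV (δV x)) =
          - lTensor g (flipT k V g) (swap12 k V g g (lTensor V ΔV (δV x))) := by
        have hk := key1 (k := k) ΔV (δV x)
        rw [c1b x, map_neg, map_neg] at hk
        exact neg_eq_iff_eq_neg.mp hk
      rw [k3, k4, ← sub_eq_zero] at h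
      refine Eq.trans ?_ h
      abel
    have hc4G : ∀ x, lTensor g δV (ΔE x) - swap12 k V g V (lTensor V ΔE (δV x))
        + lTensor g (flipT k V V) (swap12 k V g V (lTensor V ΔE (δV x))) = 0 := by
      intro x
      have h := hc4 x
      have k5 : asr k g V V (rTensor V ΔE (δV x)) =
          - lTensor g (flipT k V V) (swap12 k V g V (lTensor V ΔE (δV x))) := by
        have hk := key1 (k := k) ΔE (δV x)
        rw [c1b x, map_neg, map_neg] at hk
        exact neg_eq_iff_eq_neg.mp hk
      rw [k5, ← sub_eq_zero] at h
      refine Eq.trans ?_ h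
      abel
    have hc5G : ∀ x, lTensor V δV (δV x) - swap12 k V V V (lTensor V δV (δV x))
        + lTensor V (flipT k V V) (swap12 k V V V (lTensor V δV (δV x))) = 0 := by
      intro x
      have h := hc5 x
      have k6 : asr k V V V (rTensor V δV (δV x)) =
          - lTensor V (flipT k V V) (swap12 k V V V (lTensor V δV (δV x))) := by
        have hk := key1 (k := k) δV (δV x)
        rw [c1b x, map_neg, map_neg] at hk
        exact neg_eq_iff_eq_neg.mp hk
      rw [k6, ← sub_eq_zero] at h
      refine Eq.trans ?_ h
      abel
    have hgG : ∀ a, lTensor g δg (δg a) - swap12 k g g g (lTensor g δg (δg a))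
        + lTensor g (flipT k g g) (swap12 k g g g (lTensor g δg (δg a))) = 0 :=
      fun a => (coJacobi_iff_G hδg.1 a).mp (hδg.2 a)
    refine ⟨hanti, ?_⟩
    intro m
    rw [coJacobi_iff_G hanti m]
    have h23 := sigma23_G hanti m
    have h12 := sigma12_G hanti m
    have p111 : map (fst k g V) (map (fst k g V) (fst k g V))
        (lTensor (g × V) (uniCoprod δg ΔE ΔV δV) (uniCoprod δg ΔE ΔV δV m)
        - swap12 k (g × V) (g × V) (g × V)
            (lTensor (g × V) (uniCoprod δg ΔE ΔV δV) (uniCoprod δg ΔE ΔV δV m))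
        + lTensor (g × V) (flipT k (g × V) (g × V))
            (swap12 k (g × V) (g × V) (g × V)
              (lTensor (g × V) (uniCoprod δg ΔE ΔV δV) (uniCoprod δg ΔE ΔV δV m)))) = 0 := by
      simp only [map_sub, map_add, ← swap12_map, ← flip23_map]
      rw [F_apply]
      simp only [map_map_apply, ← map_comp, fst_comp_inl, snd_comp_inl, fst_comp_inr, snd_comp_inr,
      map_zero_left, map_zero_right, LinearMap.zero_apply, map_id, LinearMap.id_apply,
      map_add, map_sub, map_neg, map_zero, zero_add, add_zero, neg_zero, sub_zero, zero_sub]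
      have hcomb := congrArg₂ HAdd.hAdd (hgG m.1) (hc2G m.2)
      rw [add_zero] at hcomb
      refine Eq.trans ?_ hcomb
      abel
    have p112 : map (fst k g V) (map (fst k g V) (snd k g V))
        (lTensor (g × V) (uniCoprod δg ΔE ΔV δV) (uniCoprod δg ΔE ΔV δV m)
        - swap12 k (g × V) (g × V) (g × V)
            (lTensor (g × V) (uniCoprod δg ΔE ΔV δV) (uniCoprod δg ΔE ΔV δV m))
        + lTensor (g × V) (flipT k (g × V) (g × V))
            (swap12 k (g × V) (g × V) (g × V)
              (lTensor (g × V) (uniCoprod δg ΔE ΔV δV) (uniCoprod δg ΔE ΔV δV m)))) = 0 := by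
      simp only [map_sub, map_add, ← swap12_map, ← flip23_map]
      rw [F_apply]
      simp only [map_map_apply, ← map_comp, fst_comp_inl, snd_comp_inl, fst_comp_inr, snd_comp_inr,
      map_zero_left, map_zero_right, LinearMap.zero_apply, map_id, LinearMap.id_apply,
      map_add, map_sub, map_neg, map_zero, zero_add, add_zero, neg_zero, sub_zero, zero_sub]
      refine Eq.trans ?_ (hc3G m.2)
      abel
    have p122 : map (fst k g V) (map (snd k g V) (snd k g V))
        (lTensor (g × V) (uniCoprod δg ΔE ΔV δV) (uniCoprod δg ΔE ΔV δV m)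
        - swap12 k (g × V) (g × V) (g × V)
            (lTensor (g × V) (uniCoprod δg ΔE ΔV δV) (uniCoprod δg ΔE ΔV δV m))
        + lTensor (g × V) (flipT k (g × V) (g × V))
            (swap12 k (g × V) (g × V) (g × V)
              (lTensor (g × V) (uniCoprod δg ΔE ΔV δV) (uniCoprod δg ΔE ΔV δV m)))) = 0 := by
      simp only [map_sub, map_add, ← swap12_map, ← flip23_map]
      rw [F_apply]
      simp only [map_map_apply, ← map_comp, fst_comp_inl, snd_comp_inl, fst_comp_inr, snd_comp_inr,
      map_zero_left, map_zero_right, LinearMap.zero_apply, map_id, LinearMap.id_apply,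
      map_add, map_sub, map_neg, map_zero, zero_add, add_zero, neg_zero, sub_zero, zero_sub]
      refine Eq.trans ?_ (hc4G m.2)
      abel
    have p222 : map (snd k g V) (map (snd k g V) (snd k g V))
        (lTensor (g × V) (uniCoprod δg ΔE ΔV δV) (uniCoprod δg ΔE ΔV δV m)
        - swap12 k (g × V) (g × V) (g × V)
            (lTensor (g × V) (uniCoprod δg ΔE ΔV δV) (uniCoprod δg ΔE ΔV δV m))
        + lTensor (g × V) (flipT k (g × V) (g × V))
            (swap12 k (g × V) (g × V) (g × V)
              (lTensor (g × V) (uniCoprod δg ΔE ΔV δV) (uniCoprod δg ΔE ΔV δV m)))) = 0 := by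
      simp only [map_sub, map_add, ← swap12_map, ← flip23_map]
      rw [F_apply]
      simp only [map_map_apply, ← map_comp, fst_comp_inl, snd_comp_inl, fst_comp_inr, snd_comp_inr,
      map_zero_left, map_zero_right, LinearMap.zero_apply, map_id, LinearMap.id_apply,
      map_add, map_sub, map_neg, map_zero, zero_add, add_zero, neg_zero, sub_zero, zero_sub]
      refine Eq.trans ?_ (hc5G m.2)
      abel
    have p121 : map (fst k g V) (map (snd k g V) (fst k g V))
        (lTensor (g × V) (uniCoprod δg ΔE ΔV δV) (uniCoprod δg ΔE ΔV δV m)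
        - swap12 k (g × V) (g × V) (g × V)
            (lTensor (g × V) (uniCoprod δg ΔE ΔV δV) (uniCoprod δg ΔE ΔV δV m))
        + lTensor (g × V) (flipT k (g × V) (g × V))
            (swap12 k (g × V) (g × V) (g × V)
              (lTensor (g × V) (uniCoprod δg ΔE ΔV δV) (uniCoprod δg ΔE ΔV δV m)))) = 0 := by
      have h := congrArg (map (fst k g V) (map (snd k g V) (fst k g V))) h23
      rw [← flip23_map, p112, map_zero] at h
      refine neg_eq_zero.mp ?_
      rw [← map_neg]
      exact h.symm
    have p212 : map (snd k g V) (map (fst k g V) (snd k g V))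
        (lTensor (g × V) (uniCoprod δg ΔE ΔV δV) (uniCoprod δg ΔE ΔV δV m)
        - swap12 k (g × V) (g × V) (g × V)
            (lTensor (g × V) (uniCoprod δg ΔE ΔV δV) (uniCoprod δg ΔE ΔV δV m))
        + lTensor (g × V) (flipT k (g × V) (g × V))
            (swap12 k (g × V) (g × V) (g × V)
              (lTensor (g × V) (uniCoprod δg ΔE ΔV δV) (uniCoprod δg ΔE ΔV δV m)))) = 0 := by
      have h := congrArg (map (snd k g V) (map (fst k g V) (snd k g V))) h12
      rw [← swap12_map, p122, map_zero] at h
      refine neg_eq_zero.mp ?_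
      rw [← map_neg]
      exact h.symm
    have p211 : map (snd k g V) (map (fst k g V) (fst k g V))
        (lTensor (g × V) (uniCoprod δg ΔE ΔV δV) (uniCoprod δg ΔE ΔV δV m)
        - swap12 k (g × V) (g × V) (g × V)
            (lTensor (g × V) (uniCoprod δg ΔE ΔV δV) (uniCoprod δg ΔE ΔV δV m))
        + lTensor (g × V) (flipT k (g × V) (g × V))
            (swap12 k (g × V) (g × V) (g × V)
              (lTensor (g × V) (uniCoprod δg ΔE ΔV δV) (uniCoprod δg ΔE ΔV δV m)))) = 0 := by
      have h := congrArg (map (snd k g V) (map (fst k g V) (fst k g V))) h12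
      rw [← swap12_map, p121, map_zero] at h
      refine neg_eq_zero.mp ?_
      rw [← map_neg]
      exact h.symm
    have p221 : map (snd k g V) (map (snd k g V) (fst k g V))
        (lTensor (g × V) (uniCoprod δg ΔE ΔV δV) (uniCoprod δg ΔE ΔV δV m)
        - swap12 k (g × V) (g × V) (g × V)
            (lTensor (g × V) (uniCoprod δg ΔE ΔV δV) (uniCoprod δg ΔE ΔV δV m))
        + lTensor (g × V) (flipT k (g × V) (g × V))
            (swap12 k (g × V) (g × V) (g × V)
              (lTensor (g × V) (uniCoprod δg ΔE ΔV δV) (uniCoprod δg ΔE ΔV δV m)))) = 0 := by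
      have h := congrArg (map (snd k g V) (map (snd k g V) (fst k g V))) h23
      rw [← flip23_map, p212, map_zero] at h
      refine neg_eq_zero.mp ?_
      rw [← map_neg]
      exact h.symm
    refine ext3 ?_ ?_ ?_ ?_ ?_ ?_ ?_ ?_ <;>
      simp only [map_zero, p111, p112, p121, p122, p211, p212, p221, p222]


end
end

section
/- Let (g, δ_g) be a Lie coalgebra and E a vector space containing g as a subspace, with a Lie coalgebra structure δ_E on E such that g is a Lie sub-coalgebra (δ_E restricted to g equals δ_g, with values in g⊗g). Let V be a complement of g in E with projections π₁ : E → g and π₂ : E → V. Define Δ_E(x) = (π₁⊗π₂)δ_E(x), Δ_V(x) = (π₁⊗π₁)δ_E(x), δ_V(x) = (π₂⊗π₂)δ_E(x) for x ∈ V. Then (Δ_E, Δ_V, δ_V) is a Lie coalgebraic extending structure of (g, δ_g) by V, and the map φ : E → g ♮^c V, φ(a) = π₁(a) + π₂(a), is an isomorphism of Lie coalgebras whose restriction to g is the identity. -/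
open TensorProduct LinearMap

/-! Since `g` is a sub-coalgebra, `δ_E(a + x) = δ_g(a) + δ_E(x)`, so every component
`(p ⊗ q) ∘ δ_E` with `p, q ∈ {π₁, π₂}` is `δ_g` or `0` on `g` and one of `Δ_V`, `Δ_E`, `δ_V`
or the `V ⊗ g`-component on `V`. Projecting the co-Jacobi identity of `δ_E` at `x ∈ V` onto
`g⊗g⊗g`, `g⊗g⊗V`, `g⊗V⊗V` and `V⊗V⊗V` gives (CLE2)–(CLE5) term by term. Anti-cocommutativity
gives (CLE1) and identifies the `V ⊗ g`-component with `-τΔ_E`, so the four components of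
`δ_E(x)` add up to the unified co-product. With `E` modelled as `g × V`, `φ` is the identity,
and the isomorphism claim becomes the equation `uniCoprod … = δE`. -/

section Naturality

variable {k A B C A' B' C' : Type*} [Field k]
  [AddCommGroup A] [Module k A] [AddCommGroup B] [Module k B] [AddCommGroup C] [Module k C]
  [AddCommGroup A'] [Module k A'] [AddCommGroup B'] [Module k B'] [AddCommGroup C'] [Module k C']

lemma map_flipT (f : A →ₗ[k] A') (h : B →ₗ[k] B') (x : A ⊗[k] B) :
    map h f (flipT k A B x) = flipT k A' B' (map f h x) :=
  map_comm h f x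

lemma map_swap12 (f : A →ₗ[k] A') (h : B →ₗ[k] B') (l : C →ₗ[k] C')
    (x : A ⊗[k] (B ⊗[k] C)) :
    map h (map f l) (swap12 k A B C x) = swap12 k A' B' C' (map f (map h l) x) := by
  have hflip : map h f ∘ₗ flipT k A B = flipT k A' B' ∘ₗ map f h := map_comp_comm_eq h f
  simp only [swap12, coe_comp, LinearEquiv.coe_coe, Function.comp_apply, map_map_assoc,
    map_rTensor, hflip, rTensor_map, ← map_map_assoc_symm]

lemma map_asr (f : A →ₗ[k] A') (h : B →ₗ[k] B') (l : C →ₗ[k] C')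
    (x : (A ⊗[k] B) ⊗[k] C) :
    map f (map h l) (asr k A B C x) = asr k A' B' C' (map (map f h) l x) :=
  map_map_assoc f h l x

end Naturality

namespace IsLieCoalgebra

variable {k M X Y Z : Type*} [Field k] [AddCommGroup M] [Module k M]
  [AddCommGroup X] [Module k X] [AddCommGroup Y] [Module k Y] [AddCommGroup Z] [Module k Z]
  {δ : M →ₗ[k] M ⊗[k] M}

lemma flipT_map (hδ : IsLieCoalgebra δ) (a : M →ₗ[k] X) (b : M →ₗ[k] Y) (m : M) :
    flipT k X Y (map a b (δ m)) = - map b a (δ m) := by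
  rw [← map_flipT, hδ.1, map_neg]

lemma map_coJacobi (hδ : IsLieCoalgebra δ) (a : M →ₗ[k] X) (b : M →ₗ[k] Y) (c : M →ₗ[k] Z)
    (m : M) :
    map a (map b c ∘ₗ δ) (δ m) - swap12 k Y X Z (map b (map a c ∘ₗ δ) (δ m)) =
      asr k X Y Z (map (map a b ∘ₗ δ) c (δ m)) := by
  have h := congrArg (map a (map b c)) (hδ.2 m)
  rwa [map_sub, map_lTensor, map_swap12, map_lTensor, map_asr, map_rTensor] at h

end IsLieCoalgebra

section Prod

variable {k g V X Y P : Type*} [Field k] [AddCommGroup g] [Module k g]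
  [AddCommGroup V] [Module k V] [AddCommGroup X] [Module k X] [AddCommGroup Y] [Module k Y]
  [AddCommGroup P] [Module k P]

lemma map_eq_lTensor_inl_add_lTensor_inr (a : X →ₗ[k] Y) (f : g × V →ₗ[k] P) :
    map a f = lTensor Y (f ∘ₗ inl k g V) ∘ₗ map a (fst k g V)
      + lTensor Y (f ∘ₗ inr k g V) ∘ₗ map a (snd k g V) := by
  conv_lhs => rw [← coprod_comp_inl_inr f]
  rw [coprod, map_add_right, lTensor_comp_map, lTensor_comp_map]

lemma map_eq_rTensor_inl_add_rTensor_inr (f : g × V →ₗ[k] P) (a : X →ₗ[k] Y) :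
    map f a = rTensor Y (f ∘ₗ inl k g V) ∘ₗ map (fst k g V) a
      + rTensor Y (f ∘ₗ inr k g V) ∘ₗ map (snd k g V) a := by
  conv_lhs => rw [← coprod_comp_inl_inr f]
  rw [coprod, map_add_left, rTensor_comp_map, rTensor_comp_map]

lemma eq_sum_map_inl_inr_map_fst_snd (t : (g × V) ⊗[k] (g × V)) :
    t = map (inl k g V) (inl k g V) (map (fst k g V) (fst k g V) t)
      + map (inl k g V) (inr k g V) (map (fst k g V) (snd k g V) t)
      + map (inr k g V) (inl k g V) (map (snd k g V) (fst k g V) t)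
      + map (inr k g V) (inr k g V) (map (snd k g V) (snd k g V) t) := by
  have hid : (LinearMap.id : g × V →ₗ[k] g × V) =
      inl k g V ∘ₗ fst k g V + inr k g V ∘ₗ snd k g V :=
    coprod_inl_inr.symm
  conv_lhs => rw [← LinearMap.id_apply (R := k) t, ← map_id, hid]
  simp only [map_add_left, map_add_right, LinearMap.add_apply, map_map]
  abel

end Prod

section Subcoalgebra

variable {k g V X Y Z : Type*} [Field k] [AddCommGroup g] [Module k g]
  [AddCommGroup V] [Module k V] [AddCommGroup X] [Module k X] [AddCommGroup Y] [Module k Y]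
  [AddCommGroup Z] [Module k Z]
  {δg : g →ₗ[k] g ⊗[k] g} {δE : (g × V) →ₗ[k] (g × V) ⊗[k] (g × V)}

lemma map_comp_comp_inl_of_subcoalgebra
    (hsub : ∀ a : g, δE (inl k g V a) = map (inl k g V) (inl k g V) (δg a))
    (a : g × V →ₗ[k] X) (b : g × V →ₗ[k] Y) :
    map a b ∘ₗ δE ∘ₗ inl k g V = map (a ∘ₗ inl k g V) (b ∘ₗ inl k g V) ∘ₗ δg := by
  ext x
  simp only [coe_comp, Function.comp_apply, hsub, map_map]

lemma map_comp_right_apply_of_subcoalgebra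
    (hsub : ∀ a : g, δE (inl k g V a) = map (inl k g V) (inl k g V) (δg a))
    (a : g × V →ₗ[k] X) (b : g × V →ₗ[k] Y) (c : g × V →ₗ[k] Z)
    (t : (g × V) ⊗[k] (g × V)) :
    map a (map b c ∘ₗ δE) t =
      lTensor X (map (b ∘ₗ inl k g V) (c ∘ₗ inl k g V) ∘ₗ δg) (map a (fst k g V) t)
      + lTensor X (map b c ∘ₗ δE ∘ₗ inr k g V) (map a (snd k g V) t) := by
  rw [map_eq_lTensor_inl_add_lTensor_inr, comp_assoc, map_comp_comp_inl_of_subcoalgebra hsub]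
  rfl

lemma map_comp_left_apply_of_subcoalgebra
    (hsub : ∀ a : g, δE (inl k g V a) = map (inl k g V) (inl k g V) (δg a))
    (a : g × V →ₗ[k] X) (b : g × V →ₗ[k] Y) (c : g × V →ₗ[k] Z)
    (t : (g × V) ⊗[k] (g × V)) :
    map (map a b ∘ₗ δE) c t =
      rTensor Z (map (a ∘ₗ inl k g V) (b ∘ₗ inl k g V) ∘ₗ δg) (map (fst k g V) c t)
      + rTensor Z (map a b ∘ₗ δE ∘ₗ inr k g V) (map (snd k g V) c t) := by
  rw [map_eq_rTensor_inl_add_rTensor_inr, comp_assoc, map_comp_comp_inl_of_subcoalgebra hsub]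
  rfl

lemma isCoalgExtStructure_of_subcoalgebra (hδE : IsLieCoalgebra δE)
    (hsub : ∀ a : g, δE (inl k g V a) = map (inl k g V) (inl k g V) (δg a)) :
    IsCoalgExtStructure δg
      (map (fst k g V) (snd k g V) ∘ₗ δE ∘ₗ inr k g V)
      (map (fst k g V) (fst k g V) ∘ₗ δE ∘ₗ inr k g V)
      (map (snd k g V) (snd k g V) ∘ₗ δE ∘ₗ inr k g V) := by
  refine ⟨fun x => hδE.flipT_map _ _ _, fun x => hδE.flipT_map _ _ _,
    fun x => ?_, fun x => ?_, fun x => ?_, fun x => ?_⟩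
  · have H := hδE.map_coJacobi (fst k g V) (fst k g V) (fst k g V) (inr k g V x)
    simp only [map_comp_right_apply_of_subcoalgebra hsub,
      map_comp_left_apply_of_subcoalgebra hsub, fst_comp_inl, map_id, id_comp, map_add] at H
    simp only [coe_comp, Function.comp_apply, hδE.flipT_map, map_neg, neg_neg]
    convert H using 1 <;> abel
  · simpa [map_comp_right_apply_of_subcoalgebra hsub,
      map_comp_left_apply_of_subcoalgebra hsub] using
      hδE.map_coJacobi (fst k g V) (fst k g V) (snd k g V) (inr k g V x)
  · simpa [map_comp_right_apply_of_subcoalgebra hsub,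
      map_comp_left_apply_of_subcoalgebra hsub] using
      hδE.map_coJacobi (fst k g V) (snd k g V) (snd k g V) (inr k g V x)
  · simpa [map_comp_right_apply_of_subcoalgebra hsub,
      map_comp_left_apply_of_subcoalgebra hsub] using
      hδE.map_coJacobi (snd k g V) (snd k g V) (snd k g V) (inr k g V x)

lemma uniCoprod_eq_of_subcoalgebra (hδE : IsLieCoalgebra δE)
    (hsub : ∀ a : g, δE (inl k g V a) = map (inl k g V) (inl k g V) (δg a)) :
    uniCoprod δg
      (map (fst k g V) (snd k g V) ∘ₗ δE ∘ₗ inr k g V)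
      (map (fst k g V) (fst k g V) ∘ₗ δE ∘ₗ inr k g V)
      (map (snd k g V) (snd k g V) ∘ₗ δE ∘ₗ inr k g V) = δE := by
  have hinl : δE ∘ₗ inl k g V = map (inl k g V) (inl k g V) ∘ₗ δg := LinearMap.ext hsub
  have hinr : δE ∘ₗ inr k g V =
      map (inl k g V) (inr k g V) ∘ₗ map (fst k g V) (snd k g V) ∘ₗ δE ∘ₗ inr k g V
      - map (inr k g V) (inl k g V) ∘ₗ flipT k g V ∘ₗ
          map (fst k g V) (snd k g V) ∘ₗ δE ∘ₗ inr k g V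
      + map (inl k g V) (inl k g V) ∘ₗ map (fst k g V) (fst k g V) ∘ₗ δE ∘ₗ inr k g V
      + map (inr k g V) (inr k g V) ∘ₗ map (snd k g V) (snd k g V) ∘ₗ δE ∘ₗ inr k g V := by
    refine LinearMap.ext fun x => ?_
    simp only [LinearMap.add_apply, LinearMap.sub_apply, coe_comp, Function.comp_apply,
      hδE.flipT_map, map_neg, sub_neg_eq_add]
    conv_lhs => rw [eq_sum_map_inl_inr_map_fst_snd (δE (inr k g V x))]
    abel
  rw [uniCoprod, ← hinr, ← comp_assoc, ← hinl]
  exact coprod_comp_inl_inr δE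

end Subcoalgebra

noncomputable section
variable {k g V : Type*} [Field k] [CharZero k]
  [AddCommGroup g] [Module k g] [AddCommGroup V] [Module k V]

theorem extStructure_of_subcoalgebra_general (δg : g →ₗ[k] g ⊗[k] g)
    (δE : (g × V) →ₗ[k] (g × V) ⊗[k] (g × V))
    (hδE : IsLieCoalgebra δE)
    (hsub : ∀ a : g, δE (inl k g V a) = map (inl k g V) (inl k g V) (δg a)) :
    IsCoalgExtStructure δg
      (map (fst k g V) (snd k g V) ∘ₗ δE ∘ₗ inr k g V)
      (map (fst k g V) (fst k g V) ∘ₗ δE ∘ₗ inr k g V)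
      (map (snd k g V) (snd k g V) ∘ₗ δE ∘ₗ inr k g V) ∧
    uniCoprod δg
      (map (fst k g V) (snd k g V) ∘ₗ δE ∘ₗ inr k g V)
      (map (fst k g V) (fst k g V) ∘ₗ δE ∘ₗ inr k g V)
      (map (snd k g V) (snd k g V) ∘ₗ δE ∘ₗ inr k g V) = δE :=
  ⟨isCoalgExtStructure_of_subcoalgebra hδE hsub, uniCoprod_eq_of_subcoalgebra hδE hsub⟩

/-- **Theorem.** Let `(g, δ_g)` be a Lie coalgebra and `E = g ⊕ V` carry a Lie
coalgebra structure `δ_E` making `g` a Lie sub-coalgebra (via the canonical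
inclusion).  Defining `Δ_E(x) = (π₁⊗π₂)δ_E(x)`, `Δ_V(x) = (π₁⊗π₁)δ_E(x)`,
`δ_V(x) = (π₂⊗π₂)δ_E(x)`, the triple `(Δ_E, Δ_V, δ_V)` is a Lie coalgebraic
extending structure of `(g, δ_g)` by `V`, and `φ = π₁ + π₂` (here the identity of
`g ⊕ V`) is an isomorphism of Lie coalgebras from `(E, δ_E)` onto the unified
co-product `g ♮ᶜ V`, restricting to the identity on `g`. -/
theorem extStructure_of_subcoalgebra (δg : g →ₗ[k] g ⊗[k] g)
    (hδg : IsLieCoalgebra δg) (δE : (g × V) →ₗ[k] (g × V) ⊗[k] (g × V))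
    (hδE : IsLieCoalgebra δE)
    (hsub : ∀ a : g, δE (inl k g V a) = map (inl k g V) (inl k g V) (δg a)) :
    IsCoalgExtStructure δg
      (map (fst k g V) (snd k g V) ∘ₗ δE ∘ₗ inr k g V)
      (map (fst k g V) (fst k g V) ∘ₗ δE ∘ₗ inr k g V)
      (map (snd k g V) (snd k g V) ∘ₗ δE ∘ₗ inr k g V) ∧
    uniCoprod δg
      (map (fst k g V) (snd k g V) ∘ₗ δE ∘ₗ inr k g V)
      (map (fst k g V) (fst k g V) ∘ₗ δE ∘ₗ inr k g V)
      (map (snd k g V) (snd k g V) ∘ₗ δE ∘ₗ inr k g V) = δE :=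
  extStructure_of_subcoalgebra_general δg δE hδE hsub

end
end

section
/- Let (g, [·,·], δ_g) be a Lie bialgebra and E a vector space containing g as a subspace, equipped with a Lie bialgebra structure (E, [·,·], δ_E) such that (g, [·,·], δ_g) is a Lie sub-bialgebra of E. Then there exists a Lie bialgebraic extending structure Ω^{bi}(g,V) = (⊲, ⊳, f, {·,·}, Δ_E, Δ_V, δ_V) of g by a complement V of g in E such that (E, [·,·], δ_E) is isomorphic as a Lie bialgebra to the unified bi-product g ♮^{bi} V, via an isomorphism restricting to the identity on g. -/
open TensorProduct LinearMap

noncomputable section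
variable {k g V : Type*} [Field k] [CharZero k]
  [AddCommGroup g] [Module k g] [AddCommGroup V] [Module k V]

/-- The unified product bracket on `E = g ⊕ V`:
`[a+x, b+y] = [a,b] + x⊳b − y⊳a + f(x,y) + x⊲b − y⊲a + {x,y}`. -/
def uniBracket (gbr : g →ₗ[k] g →ₗ[k] g) (lhd : V →ₗ[k] g →ₗ[k] V)
    (rhd : V →ₗ[k] g →ₗ[k] g) (f : V →ₗ[k] V →ₗ[k] g)
    (br : V →ₗ[k] V →ₗ[k] V) : (g × V) →ₗ[k] (g × V) →ₗ[k] (g × V) :=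
  LinearMap.mk₂ k
    (fun u v => (gbr u.1 v.1 + rhd u.2 v.1 - rhd v.2 u.1 + f u.2 v.2,
                 lhd u.2 v.1 - lhd v.2 u.1 + br u.2 v.2))
    (by intro m₁ m₂ n; simp [Prod.ext_iff]; constructor <;> abel)
    (by intro c m n; simp [Prod.ext_iff, smul_add, smul_sub])
    (by intro m n₁ n₂; simp [Prod.ext_iff]; constructor <;> abel)
    (by intro c m n; simp [Prod.ext_iff, smul_add, smul_sub])

/-- Conditions (LE1)–(LE7): `(⊲, ⊳, f, {·,·})` is a Lie extending structure
of the Lie algebra `(g, [·,·])` by `V` (Agore–Militaru). -/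
def IsLieExtStructure (gbr : g →ₗ[k] g →ₗ[k] g) (lhd : V →ₗ[k] g →ₗ[k] V)
    (rhd : V →ₗ[k] g →ₗ[k] g) (f : V →ₗ[k] V →ₗ[k] g)
    (br : V →ₗ[k] V →ₗ[k] V) : Prop :=
  -- (LE1)
  (∀ x, f x x = 0) ∧ (∀ x, br x x = 0) ∧
  -- (LE2) : (V, ⊲) is a right g-module
  (∀ x a b, lhd x (gbr a b) = lhd (lhd x a) b - lhd (lhd x b) a) ∧
  -- (LE3)
  (∀ x a b, rhd x (gbr a b) = gbr (rhd x a) b + gbr a (rhd x b)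
      + rhd (lhd x a) b - rhd (lhd x b) a) ∧
  -- (LE4)
  (∀ x y a, lhd (br x y) a = br x (lhd y a) + br (lhd x a) y
      + lhd x (rhd y a) - lhd y (rhd x a)) ∧
  -- (LE5)
  (∀ x y a, rhd (br x y) a = rhd x (rhd y a) - rhd y (rhd x a)
      + gbr a (f x y) + f x (lhd y a) + f (lhd x a) y) ∧
  -- (LE6)
  (∀ x y z, f x (br y z) + f y (br z x) + f z (br x y)
      + rhd x (f y z) + rhd y (f z x) + rhd z (f x y) = 0) ∧
  -- (LE7)
  (∀ x y z, br x (br y z) + br y (br z x) + br z (br x y)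
      + lhd x (f y z) + lhd y (f z x) + lhd z (f x y) = 0)

/-- Conditions (BE2)–(BE7): compatibility between the Lie extending structure
and the Lie coalgebraic extending structure. -/
def BEConditions (gbr : g →ₗ[k] g →ₗ[k] g) (δg : g →ₗ[k] g ⊗[k] g)
    (lhd : V →ₗ[k] g →ₗ[k] V) (rhd : V →ₗ[k] g →ₗ[k] g)
    (f : V →ₗ[k] V →ₗ[k] g) (br : V →ₗ[k] V →ₗ[k] V)
    (ΔE : V →ₗ[k] g ⊗[k] V) (ΔV : V →ₗ[k] g ⊗[k] g)
    (δV : V →ₗ[k] V ⊗[k] V) : Prop :=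
  -- (BE2)
  (∀ a x, - ΔV (lhd x a) - δg (rhd x a) =
      flipT k g g (lTensor g (rhd.flip a) (ΔE x)) - lTensor g (rhd.flip a) (ΔE x)
      + adT gbr a (ΔV x)
      - (rTensor g (rhd x) (δg a) + lTensor g (rhd x) (δg a))) ∧
  -- (BE3)
  (∀ a x, ΔE (lhd x a) =
      - rTensor V (gbr a) (ΔE x) + lTensor g (lhd.flip a) (ΔE x)
      + rTensor V (rhd.flip a) (δV x) + lTensor g (lhd x) (δg a)) ∧
  -- (BE4)
  (∀ a x, δV (lhd x a) =
      lTensor V (lhd.flip a) (δV x) + rTensor V (lhd.flip a) (δV x)) ∧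
  -- (BE5)
  (∀ x y, δg (f x y) + ΔV (br x y) =
      (lTensor g (f x) (ΔE y) - flipT k g g (lTensor g (f x) (ΔE y)))
      + (rTensor g (rhd x) (ΔV y) + lTensor g (rhd x) (ΔV y))
      - (lTensor g (f y) (ΔE x) - flipT k g g (lTensor g (f y) (ΔE x)))
      - (rTensor g (rhd y) (ΔV x) + lTensor g (rhd y) (ΔV x))) ∧
  -- (BE6)
  (∀ x y, ΔE (br x y) =
      (rTensor V (rhd x) (ΔE y) + lTensor g (br x) (ΔE y))
      + lTensor g (lhd x) (ΔV y) + rTensor V (f x) (δV y)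
      - (rTensor V (rhd y) (ΔE x) + lTensor g (br y) (ΔE x))
      - lTensor g (lhd y) (ΔV x) - rTensor V (f y) (δV x)) ∧
  -- (BE7)
  (∀ x y, δV (br x y) =
      (rTensor V (lhd x) (ΔE y) - flipT k V V (rTensor V (lhd x) (ΔE y)))
      + (rTensor V (br x) (δV y) + lTensor V (br x) (δV y))
      - (rTensor V (lhd y) (ΔE x) - flipT k V V (rTensor V (lhd y) (ΔE x)))
      - (rTensor V (br y) (δV x) + lTensor V (br y) (δV x)))

end
noncomputable section
variable {k g V : Type*} [Field k] [CharZero k]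
  [AddCommGroup g] [Module k g] [AddCommGroup V] [Module k V]

set_option maxHeartbeats 1600000 in
/-- **Theorem.** Any Lie bialgebra structure on `E = g ⊕ V` containing
`(g, [·,·], δ_g)` as a Lie sub-bialgebra (via the canonical inclusion) is
isomorphic, by an isomorphism restricting to the identity on `g` (here the
identity of `g ⊕ V`), to a unified bi-product `g ♮ᵇⁱ V` for some Lie bialgebraic
extending structure `(⊲, ⊳, f, {·,·}, Δ_E, Δ_V, δ_V)`. -/
theorem exists_biproduct_structure (gbr : g →ₗ[k] g →ₗ[k] g)
    (δg : g →ₗ[k] g ⊗[k] g) (hg : IsLieBialgebra gbr δg)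
    (brE : (g × V) →ₗ[k] (g × V) →ₗ[k] (g × V))
    (δE : (g × V) →ₗ[k] (g × V) ⊗[k] (g × V))
    (hE : IsLieBialgebra brE δE)
    (hsubbr : ∀ a b : g, brE (inl k g V a) (inl k g V b) = inl k g V (gbr a b))
    (hsubδ : ∀ a : g, δE (inl k g V a) = map (inl k g V) (inl k g V) (δg a)) :
    ∃ (lhd : V →ₗ[k] g →ₗ[k] V) (rhd : V →ₗ[k] g →ₗ[k] g)
      (f : V →ₗ[k] V →ₗ[k] g) (br : V →ₗ[k] V →ₗ[k] V)
      (ΔE : V →ₗ[k] g ⊗[k] V) (ΔV : V →ₗ[k] g ⊗[k] g) (δV : V →ₗ[k] V ⊗[k] V),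
      IsLieBialgebra (uniBracket gbr lhd rhd f br) (uniCoprod δg ΔE ΔV δV) ∧
        uniBracket gbr lhd rhd f br = brE ∧ uniCoprod δg ΔE ΔV δV = δE := by
  classical
  set B : V →ₗ[k] (g × V) →ₗ[k] (g × V) := brE ∘ₗ inr k g V with hB
  refine ⟨((B.compl₂ (inl k g V)).compr₂ (snd k g V)),
    ((B.compl₂ (inl k g V)).compr₂ (fst k g V)),
    ((B.compl₂ (inr k g V)).compr₂ (fst k g V)),
    ((B.compl₂ (inr k g V)).compr₂ (snd k g V)),
    map (fst k g V) (snd k g V) ∘ₗ δE ∘ₗ inr k g V,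
    map (fst k g V) (fst k g V) ∘ₗ δE ∘ₗ inr k g V,
    map (snd k g V) (snd k g V) ∘ₗ δE ∘ₗ inr k g V, ?_⟩
  have halt : ∀ u, brE u u = 0 := hE.1.1
  have hanti : ∀ u v : g × V, brE u v = - brE v u := by
    intro u v
    have h := halt (u + v)
    simp only [map_add, LinearMap.add_apply, halt, zero_add, add_zero] at h
    exact eq_neg_of_add_eq_zero_right h
  have hflipmap : ∀ (t : (g × V) ⊗[k] (g × V)),
      map (snd k g V) (fst k g V) t
        = flipT k g V (map (fst k g V) (snd k g V) (flipT k (g × V) (g × V) t)) := by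
    intro t
    induction t using TensorProduct.induction_on with
    | zero => simp
    | tmul u v => simp [flipT]
    | add x y hx hy => simp only [map_add, hx, hy]
  have hcoanti : ∀ m, flipT k (g × V) (g × V) (δE m) = - δE m := hE.2.1.1
  have hdecomp : ∀ (t : (g × V) ⊗[k] (g × V)),
      t = map (inl k g V) (inl k g V) (map (fst k g V) (fst k g V) t)
        + map (inl k g V) (inr k g V) (map (fst k g V) (snd k g V) t)
        + map (inr k g V) (inl k g V) (map (snd k g V) (fst k g V) t)
        + map (inr k g V) (inr k g V) (map (snd k g V) (snd k g V) t) := by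
    intro t
    induction t using TensorProduct.induction_on with
    | zero => simp
    | tmul u v =>
        have hu : u = ((u.1, 0) : g × V) + (0, u.2) := by simp
        have hv : v = ((v.1, 0) : g × V) + (0, v.2) := by simp
        simp only [map_tmul, fst_apply, snd_apply, inl_apply, inr_apply]
        conv_lhs => rw [hu, hv]
        simp only [TensorProduct.add_tmul, TensorProduct.tmul_add]
        abel
    | add x y hx hy =>
        conv_lhs => rw [hx, hy]
        simp only [map_add]
        abel
  have hbr : uniBracket gbr ((B.compl₂ (inl k g V)).compr₂ (snd k g V))
      ((B.compl₂ (inl k g V)).compr₂ (fst k g V))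
      ((B.compl₂ (inr k g V)).compr₂ (fst k g V))
      ((B.compl₂ (inr k g V)).compr₂ (snd k g V)) = brE := by
    refine LinearMap.ext fun u => LinearMap.ext fun v => ?_
    obtain ⟨a, x⟩ := u; obtain ⟨b, y⟩ := v
    have hx : ((a, x) : g × V) = inl k g V a + inr k g V x := by simp
    have hy : ((b, y) : g × V) = inl k g V b + inr k g V y := by simp
    have hR : brE (a, x) (b, y)
        = inl k g V (gbr a b) - brE (inr k g V y) (inl k g V a)
          + brE (inr k g V x) (inl k g V b) + brE (inr k g V x) (inr k g V y) := by
      rw [hx, hy]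
      simp only [map_add, LinearMap.add_apply, hsubbr]
      rw [hanti (inl k g V a) (inr k g V y)]
      abel
    rw [hR]
    refine Prod.ext ?_ ?_ <;>
      simp only [uniBracket, LinearMap.mk₂_apply, compr₂_apply, compl₂_apply, hB,
        coe_comp, Function.comp_apply, fst_apply, snd_apply, Prod.fst_add, Prod.snd_add,
        Prod.fst_sub, Prod.snd_sub, inl_apply] <;>
      abel
  have hcop : uniCoprod δg (map (fst k g V) (snd k g V) ∘ₗ δE ∘ₗ inr k g V)
      (map (fst k g V) (fst k g V) ∘ₗ δE ∘ₗ inr k g V)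
      (map (snd k g V) (snd k g V) ∘ₗ δE ∘ₗ inr k g V) = δE := by
    refine LinearMap.ext fun u => ?_
    obtain ⟨a, x⟩ := u
    have hx : ((a, x) : g × V) = inl k g V a + inr k g V x := by simp
    have hR : δE (a, x)
        = map (inl k g V) (inl k g V) (δg a)
          + (map (inl k g V) (inl k g V) (map (fst k g V) (fst k g V) (δE (inr k g V x)))
          + map (inl k g V) (inr k g V) (map (fst k g V) (snd k g V) (δE (inr k g V x)))
          - map (inr k g V) (inl k g V)
              (flipT k g V (map (fst k g V) (snd k g V) (δE (inr k g V x))))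
          + map (inr k g V) (inr k g V) (map (snd k g V) (snd k g V) (δE (inr k g V x)))) := by
      rw [hx, map_add, hsubδ]
      conv_lhs => rw [hdecomp (δE (inr k g V x))]
      rw [hflipmap (δE (inr k g V x)), hcoanti (inr k g V x)]
      simp only [map_neg]
      abel
    rw [hR]
    simp only [uniCoprod, LinearMap.add_apply, LinearMap.sub_apply, coe_comp,
      Function.comp_apply, fst_apply, snd_apply]
    abel
  exact ⟨by rw [hbr, hcop]; exact hE, hbr, hcop⟩


end
end

section
/- Let (g, [·,·], δ_g) be a Lie bialgebra and E a vector space containing g, with a Lie bialgebra structure on E such that g is a Lie sub-bialgebra and g is an ideal of the Lie algebra E. Then E is isomorphic (via an isomorphism restricting to the identity on g) to a crossed bi-product g ◊_{⊳,f}^{Δ_E,Δ_V} V for some complement V of g in E, i.e. to a unified bi-product in which the action ⊲ : V×g → V is trivial. -/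
open TensorProduct LinearMap

/-! Take `V` to be the complement `0 × V` and read the unified-product data off the components
of `brE` and `δE`: `⊳`, `f`, `{·,·}` are the `g`- and `V`-components of `[x, a]` and `[x, y]`,
and `Δ_E`, `Δ_V`, `δ_V` are the blocks of `δE x`. As `g` is an ideal, `[x, a]` has no
`V`-component, so `⊲ = 0`. The remaining terms are forced by antisymmetry of the bracket
(for `[a, y]`) and anti-cocommutativity of `δE` (for the `V ⊗ g`-block). -/

theorem TensorProduct.sum_blocks_prod_prod {R A B C D : Type*} [CommSemiring R]
    [AddCommMonoid A] [Module R A] [AddCommMonoid B] [Module R B]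
    [AddCommMonoid C] [Module R C] [AddCommMonoid D] [Module R D]
    (t : (A × B) ⊗[R] (C × D)) :
    map (inl R A B) (inl R C D) (map (fst R A B) (fst R C D) t)
      + map (inl R A B) (inr R C D) (map (fst R A B) (snd R C D) t)
      + map (inr R A B) (inl R C D) (map (snd R A B) (fst R C D) t)
      + map (inr R A B) (inr R C D) (map (snd R A B) (snd R C D) t) = t := by
  induction t with
  | zero => simp
  | tmul x y =>
    obtain ⟨a, b⟩ := x
    obtain ⟨c, d⟩ := y
    simp only [map_tmul, inl_apply, inr_apply, fst_apply, snd_apply]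
    rw [← tmul_add, add_assoc, ← tmul_add, ← add_tmul]
    simp only [Prod.mk_add_mk, add_zero, zero_add]
  | add s t hs ht =>
    simp only [map_add]
    conv_rhs => rw [← hs, ← ht]
    abel

section

variable {k g V : Type*} [Field k] [AddCommGroup g] [Module k g] [AddCommGroup V] [Module k V]

theorem uniBracket_blocks_eq_of_ideal (gbr : g →ₗ[k] g →ₗ[k] g)
    (brE : (g × V) →ₗ[k] (g × V) →ₗ[k] (g × V)) (halt : brE.IsAlt)
    (hgbr : ∀ a b : g, brE (inl k g V a) (inl k g V b) = inl k g V (gbr a b))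
    (hideal : ∀ (e : g × V) (a : g), (brE e (inl k g V a)).2 = 0) :
    uniBracket gbr 0 (((brE.comp (inr k g V)).compl₂ (inl k g V)).compr₂ (fst k g V))
      (((brE.comp (inr k g V)).compl₂ (inr k g V)).compr₂ (fst k g V))
      (((brE.comp (inr k g V)).compl₂ (inr k g V)).compr₂ (snd k g V)) = brE := by
  have hgbr' : ∀ a b, brE (a, 0) (b, 0) = (gbr a b, 0) := hgbr
  have hideal' : ∀ e a, (brE e (a, 0)).2 = 0 := hideal
  have hanti : ∀ a y, brE (a, 0) (0, y) = -brE (0, y) (a, 0) := fun _ _ => (halt.neg _ _).symm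
  ext a b <;> simp [uniBracket, Prod.mk_zero_zero, hgbr', hideal', hanti]

theorem uniCoprod_blocks_eq (δg : g →ₗ[k] g ⊗[k] g)
    (δE : (g × V) →ₗ[k] (g × V) ⊗[k] (g × V))
    (hδE : ∀ e, flipT k (g × V) (g × V) (δE e) = - δE e)
    (hgδ : ∀ a : g, δE (inl k g V a) = map (inl k g V) (inl k g V) (δg a)) :
    uniCoprod δg ((map (fst k g V) (snd k g V)).comp (δE.comp (inr k g V)))
      ((map (fst k g V) (fst k g V)).comp (δE.comp (inr k g V)))
      ((map (snd k g V) (snd k g V)).comp (δE.comp (inr k g V))) = δE := by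
  refine prod_ext ?_ ?_
  · simp only [uniCoprod, add_comp, comp_assoc, fst_comp_inl, snd_comp_inl, comp_zero, add_zero,
      comp_id]
    exact LinearMap.ext fun a => (hgδ a).symm
  · simp only [uniCoprod, add_comp, comp_assoc, fst_comp_inr, snd_comp_inr, comp_zero, zero_add,
      comp_id]
    refine LinearMap.ext fun x => ?_
    have hflip (t : (g × V) ⊗[k] (g × V)) :
        flipT k g V (map (fst k g V) (snd k g V) t) =
          map (snd k g V) (fst k g V) (flipT k (g × V) (g × V) t) :=
      (map_comm _ _ t).symm
    simp only [LinearMap.add_apply, LinearMap.sub_apply, comp_apply]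
    rw [hflip, hδE, map_neg, map_neg, sub_neg_eq_add]
    conv_rhs => rw [← TensorProduct.sum_blocks_prod_prod (δE (inr k g V x))]
    abel

end

noncomputable section
variable {k g V : Type*} [Field k] [CharZero k]
  [AddCommGroup g] [Module k g] [AddCommGroup V] [Module k V]

theorem crossed_biproduct_of_ideal_general (gbr : g →ₗ[k] g →ₗ[k] g)
    (δg : g →ₗ[k] g ⊗[k] g)
    (brE : (g × V) →ₗ[k] (g × V) →ₗ[k] (g × V))
    (δE : (g × V) →ₗ[k] (g × V) ⊗[k] (g × V))
    (hE : IsLieBialgebra brE δE)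
    (hgbr : ∀ a b : g, brE (inl k g V a) (inl k g V b) = inl k g V (gbr a b))
    (hgδ : ∀ a : g, δE (inl k g V a) = map (inl k g V) (inl k g V) (δg a))
    (hideal : ∀ (e : g × V) (a : g), (brE e (inl k g V a)).2 = 0) :
    ∃ (rhd : V →ₗ[k] g →ₗ[k] g) (f : V →ₗ[k] V →ₗ[k] g)
      (br : V →ₗ[k] V →ₗ[k] V) (ΔE : V →ₗ[k] g ⊗[k] V)
      (ΔV : V →ₗ[k] g ⊗[k] g) (δV : V →ₗ[k] V ⊗[k] V),
      uniBracket gbr 0 rhd f br = brE ∧ uniCoprod δg ΔE ΔV δV = δE :=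
  ⟨_, _, _, _, _, _, uniBracket_blocks_eq_of_ideal gbr brE hE.1.1 hgbr hideal,
    uniCoprod_blocks_eq δg δE hE.2.1.1 hgδ⟩

/-- **Proposition (crossed bi-product).** Any Lie bialgebra structure on
`E = g ⊕ V` containing `(g,[·,·],δ_g)` as a Lie sub-bialgebra and such that `g`
is an ideal of the Lie algebra `E` is isomorphic (via an isomorphism restricting
to the identity on `g`, here the identity of `g ⊕ V`) to a crossed bi-product,
i.e. a unified bi-product with trivial action `⊲ = 0`. -/
theorem crossed_biproduct_of_ideal (gbr : g →ₗ[k] g →ₗ[k] g)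
    (δg : g →ₗ[k] g ⊗[k] g) (hg : IsLieBialgebra gbr δg)
    (brE : (g × V) →ₗ[k] (g × V) →ₗ[k] (g × V))
    (δE : (g × V) →ₗ[k] (g × V) ⊗[k] (g × V))
    (hE : IsLieBialgebra brE δE)
    (hgbr : ∀ a b : g, brE (inl k g V a) (inl k g V b) = inl k g V (gbr a b))
    (hgδ : ∀ a : g, δE (inl k g V a) = map (inl k g V) (inl k g V) (δg a))
    (hideal : ∀ (e : g × V) (a : g), (brE e (inl k g V a)).2 = 0) :
    ∃ (rhd : V →ₗ[k] g →ₗ[k] g) (f : V →ₗ[k] V →ₗ[k] g)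
      (br : V →ₗ[k] V →ₗ[k] V) (ΔE : V →ₗ[k] g ⊗[k] V)
      (ΔV : V →ₗ[k] g ⊗[k] g) (δV : V →ₗ[k] V ⊗[k] V),
      uniBracket gbr 0 rhd f br = brE ∧ uniCoprod δg ΔE ΔV δV = δE :=
  crossed_biproduct_of_ideal_general gbr δg brE δE hE hgbr hgδ hideal

end
end

section
/- Let (g, [·,·], δ_g) be a Lie bialgebra with [g,g] = g and Z(g) = 0, of codimension one in a vector space E. Then every flag datum of g has the form (0, D, 0, B) where D is a derivation of g; consequently BExtd(E, g) ≅ TFLB(g, δ_g)/≡, where (0,D,0,B) ≡ (0,D',0,B') if and only if there exist U ∈ g and β ∈ k* with D(a) = [U,a] + βD'(a) for all a, and B = δ_g(U) + βB'. -/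
open TensorProduct LinearMap

noncomputable section
variable {k g : Type*} [Field k] [CharZero k] [AddCommGroup g] [Module k g]

/-- A flag datum `(α, D, A, B)` of the Lie bialgebra `(g, [·,·], δ_g)`. -/
def IsFlagDatum (gbr : g →ₗ[k] g →ₗ[k] g) (δg : g →ₗ[k] g ⊗[k] g)
    (α : g →ₗ[k] k) (D : g →ₗ[k] g) (A : g) (B : g ⊗[k] g) : Prop :=
  -- B ∈ g ∧ g
  flipT k g g B = - B ∧
  -- (1)
  (∀ a b, α (gbr a b) = 0) ∧ δg A = 0 ∧
  (∀ a, gbr a A = TensorProduct.rid k g (lTensor g α (δg a))) ∧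
  -- (2)
  (∀ a b, D (gbr a b) = gbr (D a) b + gbr a (D b) + α a • D b - α b • D a) ∧
  -- (3)
  (A ⊗ₜ[k] B - swap12 k g g g (A ⊗ₜ[k] B) + asr k g g g (B ⊗ₜ[k] A)
      + lTensor g δg B - swap12 k g g g (lTensor g δg B)
      - asr k g g g (rTensor g δg B) = 0) ∧
  -- (4)
  (∀ a, D a ⊗ₜ[k] A - A ⊗ₜ[k] D a + α a • B + adT gbr a B + δg (D a)
      - rTensor g D (δg a) - lTensor g D (δg a) = 0)

/-- Equivalence of flag datums: `α = α'`, `A = A'`, and there are `U ∈ g`,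
`β ∈ k*` with `D(a) = [U,a] + βD'(a) − α(a)U` and
`B = δ_g(U) + βB' + U⊗A − A⊗U`. -/
def FlagEquiv (gbr : g →ₗ[k] g →ₗ[k] g) (δg : g →ₗ[k] g ⊗[k] g)
    (α : g →ₗ[k] k) (D : g →ₗ[k] g) (A : g) (B : g ⊗[k] g)
    (α' : g →ₗ[k] k) (D' : g →ₗ[k] g) (A' : g) (B' : g ⊗[k] g) : Prop :=
  α = α' ∧ A = A' ∧ ∃ (U : g) (β : k), β ≠ 0 ∧
    (∀ a, D a = gbr U a + β • D' a - α a • U) ∧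
    B = δg U + β • B' + U ⊗ₜ[k] A - A ⊗ₜ[k] U

end
noncomputable section
variable {k g : Type*} [Field k] [CharZero k] [AddCommGroup g] [Module k g]

/-- The set of Lie bialgebra structures on `E = g ⊕ k` (a space containing `g`
with codimension one) containing `(g, [·,·], δ_g)` as a Lie sub-bialgebra. -/
def BStr (k : Type*) [Field k] (g : Type*) [AddCommGroup g] [Module k g]
    (gbr : g →ₗ[k] g →ₗ[k] g) (δg : g →ₗ[k] g ⊗[k] g) :=
  {s : ((g × k) →ₗ[k] (g × k) →ₗ[k] (g × k)) ×
      ((g × k) →ₗ[k] (g × k) ⊗[k] (g × k)) //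
    IsLieBialgebra s.1 s.2 ∧
      (∀ a b : g, s.1 (inl k g k a) (inl k g k b) = inl k g k (gbr a b)) ∧
      (∀ a : g, s.2 (inl k g k a) = map (inl k g k) (inl k g k) (δg a))}

/-- Equivalence of such structures: an isomorphism of Lie bialgebras whose
restriction to `g` is the identity. -/
def BStrRel {gbr : g →ₗ[k] g →ₗ[k] g} {δg : g →ₗ[k] g ⊗[k] g}
    (s t : BStr k g gbr δg) : Prop :=
  ∃ φ : (g × k) ≃ₗ[k] (g × k),
    (∀ a : g, φ (inl k g k a) = inl k g k a) ∧
    (∀ u v, φ (s.1.1 u v) = t.1.1 (φ u) (φ v)) ∧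
    (∀ u, map (φ : (g × k) →ₗ[k] (g × k)) (φ : (g × k) →ₗ[k] (g × k)) (s.1.2 u)
        = t.1.2 (φ u))

/-- Flag datums of the special form `(0, D, 0, B)`. -/
def TFLB (k : Type*) [Field k] (g : Type*) [AddCommGroup g] [Module k g]
    (gbr : g →ₗ[k] g →ₗ[k] g) (δg : g →ₗ[k] g ⊗[k] g) :=
  {s : (g →ₗ[k] g) × (g ⊗[k] g) // IsFlagDatum gbr δg 0 s.1 0 s.2}

/-- Equivalence on `TFLB`: `D(a) = [U,a] + βD'(a)`, `B = δ_g(U) + βB'`. -/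
def TFLBRel {gbr : g →ₗ[k] g →ₗ[k] g} {δg : g →ₗ[k] g ⊗[k] g}
    (s t : TFLB k g gbr δg) : Prop :=
  ∃ (U : g) (β : k), β ≠ 0 ∧ (∀ a, s.1.1 a = gbr U a + β • t.1.1 a) ∧
    s.1.2 = δg U + β • t.1.2

end

/-!
Since `[g, g] = g`, any linear form vanishing on brackets is zero, which kills `α`; then
`[a, A] = 0` for all `a`, so `A` is central and vanishes as well.

For the classification, let `(br, δ)` be a Lie bialgebra structure on `g × k` extending `g`, and
`e = (0, 1)`. The `k`-component of `[e, (a, 0)]` is a linear form vanishing on brackets (Jacobi),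
hence zero, so `br` is determined by the derivation `D = [e, -]` of `g`. In `δ e`, the `k ⊗ k`
component vanishes by antisymmetry (characteristic zero), the `g ⊗ k` component is central by the
cocycle condition at `((a, 0), e)`, hence zero, and then the `k ⊗ g` component vanishes by
antisymmetry; so `δ e = B ∈ g ⊗ g`. Conversely the bialgebra axioms for `(D, B)` are exactly the
flag datum conditions for `(0, D, 0, B)`. Finally, the linear automorphisms of `g × k` fixing `g`
are the shears `(a, t) ↦ (a + t U, β t)` with `β ≠ 0`, and such a shear is a morphism from the
structure of `(D, B)` to that of `(D', B')` iff `D = [U, -] + β D'` and `B = δ_g U + β B'`.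
-/

section TensorLemmas

variable {k : Type*} [Field k] {M N P M' N' P' : Type*}
  [AddCommGroup M] [Module k M] [AddCommGroup N] [Module k N] [AddCommGroup P] [Module k P]
  [AddCommGroup M'] [Module k M'] [AddCommGroup N'] [Module k N'] [AddCommGroup P'] [Module k P']

lemma flipT_map_s12 (f : M →ₗ[k] M') (f' : N →ₗ[k] N') (t : M ⊗[k] N) :
    flipT k M' N' (map f f' t) = map f' f (flipT k M N t) :=
  (map_comm f' f t).symm

lemma swap12_map_s12 (f : M →ₗ[k] M') (f' : N →ₗ[k] N') (f'' : P →ₗ[k] P')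
    (t : M ⊗[k] (N ⊗[k] P)) :
    swap12 k M' N' P' (map f (map f' f'') t) = map f' (map f f'') (swap12 k M N P t) := by
  induction t using TensorProduct.induction_on with
  | zero => simp
  | tmul m x =>
    induction x using TensorProduct.induction_on with
    | zero => simp
    | tmul n p => rfl
    | add x y hx hy => simp only [tmul_add, map_add, hx, hy]
  | add x y hx hy => simp only [map_add, hx, hy]

lemma asr_map_s12 (f : M →ₗ[k] M') (f' : N →ₗ[k] N') (f'' : P →ₗ[k] P')
    (t : (M ⊗[k] N) ⊗[k] P) :
    asr k M' N' P' (map (map f f') f'' t) = map f (map f' f'') (asr k M N P t) :=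
  (LinearMap.congr_fun (map_map_comp_assoc_eq f f' f'') t).symm

lemma TensorProduct.map_sub_left (f f' : M →ₗ[k] M') (f'' : N →ₗ[k] N') :
    map (f - f') f'' = map f f'' - map f' f'' :=
  TensorProduct.ext' fun m n => by simp [sub_tmul]

lemma rid_rTensor (f : M →ₗ[k] M') (t : M ⊗[k] k) :
    TensorProduct.rid k M' (rTensor k f t) = f (TensorProduct.rid k M t) := by
  induction t using TensorProduct.induction_on with
  | zero => simp
  | tmul m c => simp
  | add x y hx hy => simp [hx, hy]

lemma map_inl_inl_injective :
    Function.Injective (map (inl k M N) (inl k M' N')) :=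
  map_injective_of_flat_flat _ _ inl_injective inl_injective

lemma map_inl_map_inl_inl_injective :
    Function.Injective (map (inl k M N) (map (inl k M' N') (inl k P P'))) :=
  map_injective_of_flat_flat _ _ inl_injective map_inl_inl_injective

lemma inl_comp_fst_add_inr_comp_snd :
    inl k M N ∘ₗ fst k M N + inr k M N ∘ₗ snd k M N = LinearMap.id := by
  ext <;> simp

lemma eq_map_inl_inl_of_components_eq_zero {t : (M × N) ⊗[k] (M' × N')}
    (h₁ : map (fst k M N) (snd k M' N') t = 0) (h₂ : map (snd k M N) (fst k M' N') t = 0)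
    (h₃ : map (snd k M N) (snd k M' N') t = 0) :
    t = map (inl k M N) (inl k M' N') (map (fst k M N) (fst k M' N') t) := by
  conv_lhs => rw [← LinearMap.id_apply (R := k) t, ← map_id,
    ← inl_comp_fst_add_inr_comp_snd (M := M), ← inl_comp_fst_add_inr_comp_snd (M := M')]
  simp only [map_add_left, map_add_right, LinearMap.add_apply, ← map_map, h₁, h₂, h₃, map_zero,
    add_zero]

lemma eq_zero_of_flipT_eq_neg [CharZero k] {t : k ⊗[k] k} (h : flipT k k k t = -t) : t = 0 := by
  have hlid : TensorProduct.lid k k t = -TensorProduct.lid k k t := by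
    rw [← map_neg, ← h, flipT, LinearEquiv.coe_coe, lid_comm, lid_eq_rid]
  rwa [CharZero.eq_neg_self_iff, LinearEquiv.map_eq_zero_iff] at hlid

lemma map_snd_snd_eq_zero_of_flipT_eq_neg [CharZero k] {t : (M × k) ⊗[k] (M × k)}
    (ht : flipT k _ _ t = -t) : map (snd k M k) (snd k M k) t = 0 :=
  eq_zero_of_flipT_eq_neg (by rw [flipT_map_s12, ht, map_neg])

lemma map_snd_fst_eq_zero_of_flipT_eq_neg {t : (M × N) ⊗[k] (M × N)} (ht : flipT k _ _ t = -t)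
    (h : map (fst k M N) (snd k M N) t = 0) : map (snd k M N) (fst k M N) t = 0 := by
  have := flipT_map_s12 (fst k M N) (snd k M N) t
  rw [h, map_zero, ht, map_neg] at this
  exact neg_eq_zero.mp this.symm

def coJacobiator (δ : M →ₗ[k] M ⊗[k] M) : M ⊗[k] M →ₗ[k] M ⊗[k] (M ⊗[k] M) :=
  lTensor M δ - swap12 k M M M ∘ₗ lTensor M δ - asr k M M M ∘ₗ rTensor M δ

lemma coJacobiator_eq_zero_iff (δ : M →ₗ[k] M ⊗[k] M) (t : M ⊗[k] M) :
    coJacobiator δ t = 0 ↔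
      lTensor M δ t - swap12 k M M M (lTensor M δ t) = asr k M M M (rTensor M δ t) :=
  sub_eq_zero

lemma coJacobiator_map {δM : M →ₗ[k] M ⊗[k] M} {δN : N →ₗ[k] N ⊗[k] N} {i : M →ₗ[k] N}
    (hi : δN ∘ₗ i = map i i ∘ₗ δM) (t : M ⊗[k] M) :
    coJacobiator δN (map i i t) = map i (map i i) (coJacobiator δM t) := by
  simp only [coJacobiator, LinearMap.sub_apply, LinearMap.comp_apply, lTensor_map, rTensor_map,
    hi, ← map_lTensor, ← map_rTensor, swap12_map_s12, asr_map_s12, map_sub]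

lemma adT_map {br : N →ₗ[k] N →ₗ[k] N} {i : M →ₗ[k] N} {u : N} {φ : M →ₗ[k] M}
    (h : br u ∘ₗ i = i ∘ₗ φ) (t : M ⊗[k] M) :
    adT br u (map i i t) = map i i (rTensor M φ t + lTensor M φ t) := by
  simp only [adT, LinearMap.add_apply, rTensor_map, lTensor_map, h, map_add, ← map_rTensor,
    ← map_lTensor]

end TensorLemmas

section LieLemmas

variable {k g : Type*} [Field k] [AddCommGroup g] [Module k g]

lemma bracket_antisymm {br : g →ₗ[k] g →ₗ[k] g} (halt : ∀ a, br a a = 0) (u v : g) :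
    br u v = -br v u := by
  have h := halt (u + v)
  simp only [map_add, LinearMap.add_apply, halt, zero_add, add_zero] at h
  exact eq_neg_of_add_eq_zero_right h

lemma eq_zero_of_span_bracket_eq_top {M : Type*} [AddCommGroup M] [Module k M]
    {gbr : g →ₗ[k] g →ₗ[k] g} (hperfect : Submodule.span k {c : g | ∃ a b, gbr a b = c} = ⊤)
    {f : g →ₗ[k] M} (hf : ∀ a b, f (gbr a b) = 0) : f = 0 :=
  LinearMap.ext_on hperfect (by rintro _ ⟨a, b, rfl⟩; exact hf a b)

end LieLemmas

section FlagBialgebra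

variable {k g : Type*} [Field k] [AddCommGroup g] [Module k g]

local notation "ι" => inl k g k

def flagBracket (gbr : g →ₗ[k] g →ₗ[k] g) (D : g →ₗ[k] g) :
    g × k →ₗ[k] g × k →ₗ[k] g × k :=
  LinearMap.mk₂ k (fun u v => (gbr u.1 v.1 + u.2 • D v.1 - v.2 • D u.1, 0))
    (by intro u u' v; ext <;> simp [add_smul]; abel)
    (by intro c u v; ext <;> simp [smul_add, smul_sub, mul_smul, smul_comm c])
    (by intro u v v'; ext <;> simp [add_smul]; abel)
    (by intro c u v; ext <;> simp [smul_add, smul_sub, mul_smul, smul_comm c])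

def flagCobracket (δg : g →ₗ[k] g ⊗[k] g) (B : g ⊗[k] g) :
    g × k →ₗ[k] (g × k) ⊗[k] (g × k) :=
  map ι ι ∘ₗ (δg ∘ₗ fst k g k + toSpanSingleton k _ B ∘ₗ snd k g k)

def derivOfBracket (br : g × k →ₗ[k] g × k →ₗ[k] g × k) : g →ₗ[k] g :=
  fst k g k ∘ₗ br (inr k g k 1) ∘ₗ ι

def tensorOfCobracket (δ : g × k →ₗ[k] (g × k) ⊗[k] (g × k)) : g ⊗[k] g :=
  map (fst k g k) (fst k g k) (δ (inr k g k 1))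

variable {gbr : g →ₗ[k] g →ₗ[k] g} {δg : g →ₗ[k] g ⊗[k] g} {D : g →ₗ[k] g} {B : g ⊗[k] g}

@[simp] lemma flagBracket_apply (u v : g × k) :
    flagBracket gbr D u v = (gbr u.1 v.1 + u.2 • D v.1 - v.2 • D u.1, 0) := rfl

lemma flagBracket_comp_inl (u : g × k) :
    flagBracket gbr D u ∘ₗ ι = ι ∘ₗ (gbr u.1 + u.2 • D) := by
  ext c : 1
  ext <;> simp

lemma flagCobracket_apply (u : g × k) :
    flagCobracket δg B u = map ι ι (δg u.1 + u.2 • B) := by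
  simp [flagCobracket]

lemma flagCobracket_comp_inl : flagCobracket δg B ∘ₗ ι = map ι ι ∘ₗ δg := by
  ext a : 1
  simp [flagCobracket_apply]

@[simp] lemma derivOfBracket_flagBracket : derivOfBracket (flagBracket gbr D) = D := by
  ext c
  simp [derivOfBracket]

@[simp] lemma tensorOfCobracket_flagCobracket : tensorOfCobracket (flagCobracket δg B) = B := by
  simp [tensorOfCobracket, flagCobracket_apply, map_map]

lemma isLieBracket_flagBracket_iff (hg : IsLieBracket gbr) :
    IsLieBracket (flagBracket gbr D) ↔ ∀ a b, D (gbr a b) = gbr (D a) b + gbr a (D b) := by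
  constructor
  · intro h a b
    simpa using congrArg Prod.fst (h.2 (inr k g k 1) (ι a) (ι b))
  · intro hD
    refine ⟨fun u => by ext <;> simp [hg.1], fun u v w => ?_⟩
    ext
    · simp only [flagBracket_apply, Prod.fst_add, map_add, map_sub, map_smul, LinearMap.add_apply,
        LinearMap.sub_apply, LinearMap.smul_apply, smul_add, smul_sub, smul_smul, zero_smul,
        sub_zero, add_zero]
      rw [hg.2 u.1 v.1 w.1, hD v.1 w.1, hD u.1 v.1, hD u.1 w.1,
        bracket_antisymm hg.1 (D u.1) v.1]
      module
    · simp

lemma isLieCoalgebra_flagCobracket_iff (hδ : IsLieCoalgebra δg) :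
    IsLieCoalgebra (flagCobracket δg B) ↔ flipT k g g B = -B ∧ coJacobiator δg B = 0 := by
  have hflip : ∀ u : g × k, flipT _ _ _ (flagCobracket δg B u) + flagCobracket δg B u =
      map ι ι (u.2 • (flipT k g g B + B)) := by
    intro u
    rw [flagCobracket_apply, flipT_map_s12, ← map_add]
    congr 1
    rw [map_add, map_smul, hδ.1]
    module
  have hcoJ : ∀ u : g × k, coJacobiator (flagCobracket δg B) (flagCobracket δg B u) =
      map ι (map ι ι) (u.2 • coJacobiator δg B) := by
    intro u
    rw [flagCobracket_apply, coJacobiator_map flagCobracket_comp_inl, map_add, map_smul,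
      (coJacobiator_eq_zero_iff _ _).2 (hδ.2 u.1), zero_add]
  simp only [IsLieCoalgebra, ← coJacobiator_eq_zero_iff, eq_neg_iff_add_eq_zero, hflip, hcoJ]
  constructor
  · rintro ⟨h₁, h₂⟩
    exact ⟨map_inl_inl_injective (by simpa using h₁ (inr k g k 1)),
      map_inl_map_inl_inl_injective (by simpa using h₂ (inr k g k 1))⟩
  · rintro ⟨h₁, h₂⟩
    simp [h₁, h₂]

lemma flag_cocycle_iff (hcomp : ∀ a c, δg (gbr a c) = adT gbr a (δg c) - adT gbr c (δg a)) :
    (∀ u v, flagCobracket δg B (flagBracket gbr D u v) =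
      adT (flagBracket gbr D) u (flagCobracket δg B v) -
        adT (flagBracket gbr D) v (flagCobracket δg B u)) ↔
    ∀ a, δg (D a) = rTensor g D (δg a) + lTensor g D (δg a) - adT gbr a B := by
  have key : ∀ u v : g × k, (flagCobracket δg B (flagBracket gbr D u v) =
      adT (flagBracket gbr D) u (flagCobracket δg B v) -
        adT (flagBracket gbr D) v (flagCobracket δg B u)) ↔
      δg (gbr u.1 v.1 + u.2 • D v.1 - v.2 • D u.1) =
        (rTensor g (gbr u.1 + u.2 • D) + lTensor g (gbr u.1 + u.2 • D)) (δg v.1 + v.2 • B) -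
        (rTensor g (gbr v.1 + v.2 • D) + lTensor g (gbr v.1 + v.2 • D)) (δg u.1 + u.2 • B) := by
    intro u v
    rw [flagCobracket_apply, flagCobracket_apply, flagCobracket_apply,
      adT_map (flagBracket_comp_inl u), adT_map (flagBracket_comp_inl v), ← map_sub,
      map_inl_inl_injective.eq_iff]
    simp
  simp only [key]
  constructor
  · intro h a
    simpa [adT] using h (inr k g k 1) (ι a)
  · intro h u v
    simp only [map_add, map_sub, map_smul, hcomp, h]
    simp only [adT, rTensor_add, lTensor_add, rTensor_smul, lTensor_smul, LinearMap.add_apply,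
      LinearMap.smul_apply]
    module

lemma isFlagDatum_zero_zero_iff :
    IsFlagDatum gbr δg 0 D 0 B ↔
      flipT k g g B = -B ∧ (∀ a b, D (gbr a b) = gbr (D a) b + gbr a (D b)) ∧
        coJacobiator δg B = 0 ∧
        ∀ a, δg (D a) = rTensor g D (δg a) + lTensor g D (δg a) - adT gbr a B := by
  have h4 : ∀ a, adT gbr a B + δg (D a) - rTensor g D (δg a) - lTensor g D (δg a) = 0 ↔
      δg (D a) = rTensor g D (δg a) + lTensor g D (δg a) - adT gbr a B := fun a => by
    rw [← sub_eq_zero (a := δg (D a))]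
    constructor <;> intro h <;> rw [← h] <;> abel
  simp [IsFlagDatum, coJacobiator, h4]

lemma isLieBialgebra_flag_iff (hg : IsLieBialgebra gbr δg) :
    IsLieBialgebra (flagBracket gbr D) (flagCobracket δg B) ↔ IsFlagDatum gbr δg 0 D 0 B := by
  rw [IsLieBialgebra, isLieBracket_flagBracket_iff hg.1, isLieCoalgebra_flagCobracket_iff hg.2.1,
    flag_cocycle_iff hg.2.2, isFlagDatum_zero_zero_iff]
  tauto

end FlagBialgebra

section Extraction

variable {k g : Type*} [Field k] [AddCommGroup g] [Module k g] {gbr : g →ₗ[k] g →ₗ[k] g}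
  {δg : g →ₗ[k] g ⊗[k] g} {D : g →ₗ[k] g}

local notation "ι" => inl k g k

lemma eq_inl_add_smul_inr (u : g × k) : u = ι u.1 + u.2 • inr k g k 1 := by
  ext <;> simp

lemma bracket_apply_eq_of_apply_inl_inl {br : g × k →ₗ[k] g × k →ₗ[k] g × k}
    (halt : ∀ u, br u u = 0) (hbr : ∀ a b, br (ι a) (ι b) = ι (gbr a b)) (u v : g × k) :
    br u v = ι (gbr u.1 v.1) + u.2 • br (inr k g k 1) (ι v.1) - v.2 • br (inr k g k 1) (ι u.1) := by
  conv_lhs => rw [eq_inl_add_smul_inr u, eq_inl_add_smul_inr v]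
  simp only [map_add, map_smul, LinearMap.add_apply, LinearMap.smul_apply, hbr, halt, smul_zero,
    bracket_antisymm halt (ι u.1) (inr k g k 1)]
  module

lemma eq_flagBracket_derivOfBracket {br : g × k →ₗ[k] g × k →ₗ[k] g × k} (hLB : IsLieBracket br)
    (hbr : ∀ a b, br (ι a) (ι b) = ι (gbr a b))
    (hperfect : Submodule.span k {c : g | ∃ a b, gbr a b = c} = ⊤) :
    br = flagBracket gbr (derivOfBracket br) := by
  have hexp := bracket_apply_eq_of_apply_inl_inl hLB.1 hbr
  have hα : snd k g k ∘ₗ br (inr k g k 1) ∘ₗ ι = 0 :=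
    eq_zero_of_span_bracket_eq_top hperfect fun a b => by
      have hJ := congrArg Prod.snd (hLB.2 (inr k g k 1) (ι a) (ι b))
      rw [hbr, hexp (br _ (ι a)) (ι b), hexp (ι a) (br _ (ι b))] at hJ
      simp only [Prod.snd_add, Prod.snd_sub, Prod.smul_snd, inl_apply, smul_eq_mul, zero_add,
        sub_zero, zero_mul] at hJ
      simp only [LinearMap.comp_apply, snd_apply, inl_apply, hJ]
      ring
  have hD : ∀ c, br (inr k g k 1) (ι c) = ι (derivOfBracket br c) :=
    fun c => Prod.ext rfl (LinearMap.congr_fun hα c)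
  refine LinearMap.ext fun u => LinearMap.ext fun v => ?_
  rw [hexp, hD, hD]
  ext <;> simp

lemma rTensor_map_fst_snd_cobracket_eq_zero {δE : g × k →ₗ[k] (g × k) ⊗[k] (g × k)}
    (hcomp : ∀ u v, δE (flagBracket gbr D u v) =
      adT (flagBracket gbr D) u (δE v) - adT (flagBracket gbr D) v (δE u))
    (hδ : ∀ a, δE (ι a) = map ι ι (δg a))
    (hss : map (snd k g k) (snd k g k) (δE (inr k g k 1)) = 0) (a : g) :
    rTensor k (gbr a) (map (fst k g k) (snd k g k) (δE (inr k g k 1))) = 0 := by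
  have hfst : fst k g k ∘ₗ flagBracket gbr D (ι a) =
      gbr a ∘ₗ fst k g k - toSpanSingleton k g (D a) ∘ₗ snd k g k := by
    ext <;> simp
  have hsnd : snd k g k ∘ₗ flagBracket gbr D (ι a) = 0 := by
    ext <;> simp
  have hkill : ∀ t, map (fst k g k) (snd k g k) (map ι ι t) = 0 := by
    intro t
    simp [map_map]
  have h := congrArg (map (fst k g k) (snd k g k)) (hcomp (ι a) (inr k g k 1))
  rw [show flagBracket gbr D (ι a) (inr k g k 1) = ι (-D a) by ext <;> simp,
    hδ, hkill, hδ, adT_map (flagBracket_comp_inl _), map_sub, hkill, sub_zero] at h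
  simp only [adT, LinearMap.add_apply, map_add, map_rTensor, map_lTensor, hfst, hsnd,
    map_zero_right, LinearMap.zero_apply, add_zero, map_sub_left, LinearMap.sub_apply] at h
  rw [← rTensor_map, ← rTensor_map, hss, map_zero, sub_zero] at h
  exact h.symm

lemma eq_flagCobracket_tensorOfCobracket [CharZero k] {δE : g × k →ₗ[k] (g × k) ⊗[k] (g × k)}
    (hbia : IsLieBialgebra (flagBracket gbr D) δE) (hδ : ∀ a, δE (ι a) = map ι ι (δg a))
    (hcenter : ∀ c : g, (∀ a, gbr a c = 0) → c = 0) :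
    δE = flagCobracket δg (tensorOfCobracket δE) := by
  have hanti := hbia.2.1.1 (inr k g k 1)
  have hss := map_snd_snd_eq_zero_of_flipT_eq_neg hanti
  have hfs : map (fst k g k) (snd k g k) (δE (inr k g k 1)) = 0 := by
    refine (TensorProduct.rid k g).map_eq_zero_iff.mp (hcenter _ fun a => ?_)
    rw [← rid_rTensor, rTensor_map_fst_snd_cobracket_eq_zero hbia.2.2 hδ hss, map_zero]
  have hsf := map_snd_fst_eq_zero_of_flipT_eq_neg hanti hfs
  refine LinearMap.prod_ext (LinearMap.ext fun a => ?_) (LinearMap.ext_ring ?_)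
  · simpa [flagCobracket_apply] using hδ a
  · rw [LinearMap.comp_apply, eq_map_inl_inl_of_components_eq_zero hfs hsf hss]
    simp [flagCobracket_apply, tensorOfCobracket]

end Extraction

section Shear

variable {k g : Type*} [Field k] [AddCommGroup g] [Module k g] {gbr : g →ₗ[k] g →ₗ[k] g}
  {δg : g →ₗ[k] g ⊗[k] g} {D D' : g →ₗ[k] g} {B B' : g ⊗[k] g} {U : g} {β : k}

local notation "ι" => inl k g k

def shear (U : g) (β : k) : g × k →ₗ[k] g × k :=
  (fst k g k + toSpanSingleton k g U ∘ₗ snd k g k).prod (β • snd k g k)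

@[simp] lemma shear_apply (u : g × k) : shear U β u = (u.1 + u.2 • U, β * u.2) := rfl

lemma shear_comp_inl : shear U β ∘ₗ ι = ι := by
  ext a <;> simp

lemma eq_shear_of_apply_inl {φ : g × k →ₗ[k] g × k} (hφ : ∀ a, φ (ι a) = ι a) :
    φ = shear (φ (inr k g k 1)).1 (φ (inr k g k 1)).2 := by
  refine LinearMap.prod_ext (LinearMap.ext fun a => ?_) (LinearMap.ext_ring ?_)
  · simpa using hφ a
  · ext <;> simp

def shearEquiv (U : g) (hβ : β ≠ 0) : (g × k) ≃ₗ[k] (g × k) :=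
  LinearEquiv.ofLinearMap (shear U β) (shear (-β⁻¹ • U) β⁻¹)
    (by ext <;> simp [hβ]) (by ext <;> simp [hβ])

lemma snd_apply_inr_ne_zero (φ : (g × k) ≃ₗ[k] (g × k)) (hφ : ∀ a, φ (ι a) = ι a) :
    (φ (inr k g k 1)).2 ≠ 0 := by
  intro h0
  obtain ⟨u, hu⟩ := φ.surjective (inr k g k 1)
  have hsh := LinearMap.congr_fun (eq_shear_of_apply_inl (φ := (φ : g × k →ₗ[k] g × k)) hφ) u
  simp only [LinearEquiv.coe_coe, hu, shear_apply, h0, zero_mul] at hsh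
  simpa using congrArg Prod.snd hsh

lemma shear_flagBracket_iff (halt : ∀ a, gbr a a = 0) :
    (∀ u v, shear U β (flagBracket gbr D u v) = flagBracket gbr D' (shear U β u) (shear U β v)) ↔
      ∀ a, D a = gbr U a + β • D' a := by
  constructor
  · intro h a
    simpa using congrArg Prod.fst (h (inr k g k 1) (ι a))
  · intro h u v
    ext
    · simp only [shear_apply, flagBracket_apply, h, map_add, map_smul, LinearMap.add_apply,
        LinearMap.smul_apply, halt, smul_zero, add_zero, smul_add, smul_smul,
        bracket_antisymm halt u.1 U]
      module
    · simp

lemma map_shear_map_inl_inl (t : g ⊗[k] g) :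
    map (shear U β) (shear U β) (map ι ι t) = map ι ι t := by
  rw [map_map, shear_comp_inl]

lemma shear_flagCobracket_iff :
    (∀ u, map (shear U β) (shear U β) (flagCobracket δg B u) = flagCobracket δg B' (shear U β u)) ↔
      B = δg U + β • B' := by
  simp only [flagCobracket_apply, map_shear_map_inl_inl, map_inl_inl_injective.eq_iff, shear_apply]
  constructor
  · intro h
    simpa using h (inr k g k 1)
  · intro h u
    rw [h]
    simp only [map_add, map_smul, smul_add, smul_smul]
    module

lemma exists_flag_iso_iff (halt : ∀ a, gbr a a = 0) :
    (∃ φ : (g × k) ≃ₗ[k] (g × k), (∀ a, φ (ι a) = ι a) ∧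
      (∀ u v, φ (flagBracket gbr D u v) = flagBracket gbr D' (φ u) (φ v)) ∧
      ∀ u, map (φ : g × k →ₗ[k] g × k) φ (flagCobracket δg B u) = flagCobracket δg B' (φ u)) ↔
    ∃ (U : g) (β : k), β ≠ 0 ∧ (∀ a, D a = gbr U a + β • D' a) ∧ B = δg U + β • B' := by
  constructor
  · rintro ⟨φ, hφ, hbr, hδ⟩
    have hsh : (φ : g × k →ₗ[k] g × k) = shear (φ (inr k g k 1)).1 (φ (inr k g k 1)).2 :=
      eq_shear_of_apply_inl hφ
    refine ⟨(φ (inr k g k 1)).1, (φ (inr k g k 1)).2, snd_apply_inr_ne_zero φ hφ,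
      (shear_flagBracket_iff halt).1 fun u v => ?_,
      shear_flagCobracket_iff.1 fun u => ?_⟩
    · rw [← hsh]
      exact hbr u v
    · rw [← hsh]
      exact hδ u
  · rintro ⟨U, β, hβ, hD, hB⟩
    exact ⟨shearEquiv U hβ, fun a => LinearMap.congr_fun shear_comp_inl a,
      (shear_flagBracket_iff halt).2 hD, shear_flagCobracket_iff.2 hB⟩

end Shear

section Classification

variable {k g : Type*} [Field k] [AddCommGroup g] [Module k g]
  {gbr : g →ₗ[k] g →ₗ[k] g} {δg : g →ₗ[k] g ⊗[k] g}

lemma BStr.eq_flag [CharZero k] (s : BStr k g gbr δg)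
    (hperfect : Submodule.span k {c : g | ∃ a b, gbr a b = c} = ⊤)
    (hcenter : ∀ c : g, (∀ a, gbr a c = 0) → c = 0) :
    s.1.1 = flagBracket gbr (derivOfBracket s.1.1) ∧
      s.1.2 = flagCobracket δg (tensorOfCobracket s.1.2) := by
  have hbr := eq_flagBracket_derivOfBracket s.2.1.1 s.2.2.1 hperfect
  refine ⟨hbr, eq_flagCobracket_tensorOfCobracket (D := derivOfBracket s.1.1) ?_ s.2.2.2 hcenter⟩
  rw [← hbr]
  exact s.2.1

def tflbEquivBStr [CharZero k] (hg : IsLieBialgebra gbr δg)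
    (hperfect : Submodule.span k {c : g | ∃ a b, gbr a b = c} = ⊤)
    (hcenter : ∀ c : g, (∀ a, gbr a c = 0) → c = 0) :
    TFLB k g gbr δg ≃ BStr k g gbr δg where
  toFun d := ⟨(flagBracket gbr d.1.1, flagCobracket δg d.1.2), (isLieBialgebra_flag_iff hg).2 d.2,
    fun a b => by ext <;> simp, fun a => by simp [flagCobracket_apply]⟩
  invFun s := ⟨(derivOfBracket s.1.1, tensorOfCobracket s.1.2), by
    obtain ⟨hbr, hδ⟩ := s.eq_flag hperfect hcenter
    refine (isLieBialgebra_flag_iff hg).1 ?_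
    dsimp only
    rw [← hbr, ← hδ]
    exact s.2.1⟩
  left_inv d := Subtype.ext (Prod.ext derivOfBracket_flagBracket tensorOfCobracket_flagCobracket)
  right_inv s := Subtype.ext <| Prod.ext (s.eq_flag hperfect hcenter).1.symm
    (s.eq_flag hperfect hcenter).2.symm

end Classification

noncomputable section

variable {k g : Type*} [Field k] [CharZero k] [AddCommGroup g] [Module k g]

/-- **Corollary.** If `[g,g] = g` and `Z(g) = 0`, then every flag datum has the
form `(0, D, 0, B)` with `D` a derivation, and
`BExtd(E, g) ≅ TFLB(g, δ_g)/≡` for `E` of codimension one over `g`. -/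
theorem bextd_eq_tflb (gbr : g →ₗ[k] g →ₗ[k] g) (δg : g →ₗ[k] g ⊗[k] g)
    (hg : IsLieBialgebra gbr δg)
    (hperfect : Submodule.span k {c : g | ∃ a b, gbr a b = c} = ⊤)
    (hcenter : ∀ c : g, (∀ a, gbr a c = 0) → c = 0) :
    (∀ (α : g →ₗ[k] k) (D : g →ₗ[k] g) (A : g) (B : g ⊗[k] g),
      IsFlagDatum gbr δg α D A B →
        α = 0 ∧ A = 0 ∧ ∀ a b, D (gbr a b) = gbr (D a) b + gbr a (D b)) ∧
    Nonempty (Quot (BStrRel (gbr := gbr) (δg := δg)) ≃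
      Quot (TFLBRel (gbr := gbr) (δg := δg))) := by
  refine ⟨fun α D A B hfd => ?_, ⟨(Quot.congr (tflbEquivBStr hg hperfect hcenter)
    fun _ _ => (exists_flag_iso_iff hg.1.1).symm).symm⟩⟩
  obtain rfl : α = 0 := eq_zero_of_span_bracket_eq_top hperfect hfd.2.1
  exact ⟨rfl, hcenter A fun a => by simpa using hfd.2.2.2.1 a,
    fun a b => by simpa using hfd.2.2.2.2.1 a b⟩

end
end
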